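/- arXiv:1401.5778 — 8 statements merged into one kernel-verified Lean document; each statement's English description precedes it below -/
import Mathlib

section
/- Let v ∈ ℚ^J be the vector with v_b = 1 and v_{(k,p)} = 1 − p/a_k. Then C·v = χ·e_b, where e_b ∈ ℚ^J is the standard basis vector at the branching index b. (This encodes the identities π₀(γ_b) = χ·ω_b and π_*(γ_b) = −Σ_{k,p}(1−p/a_k)·γ_{k,p} for the simple root γ_b at the branching node of the root system with Gram matrix C, where π₀, π_* are the orthogonal projections onto ℂω_b and its orthogonal complement and ω_b is the fundamental weight at the branching node.) -/
open scoped BigOperators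

/-- The index set `J = {b} ∪ {(k,p) : 1 ≤ k ≤ 3, 1 ≤ p ≤ a_k - 1}`, where `none` is the
branching index `b` and `some ⟨k, p⟩` encodes the pair `(k, p.val + 1)`. -/
abbrev JIdx (a : Fin 3 → ℕ) := Option ((k : Fin 3) × Fin (a k - 1))

/-- The Cartan matrix of the T-shaped tree `T(a₁,a₂,a₃)`. -/
def Cartan (a : Fin 3 → ℕ) : Matrix (JIdx a) (JIdx a) ℚ :=
  Matrix.of fun i j =>
    match i, j with
    | none, none => 2
    | none, some ⟨_, p⟩ => if p.val = 0 then -1 else 0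
    | some ⟨_, p⟩, none => if p.val = 0 then -1 else 0
    | some ⟨k, p⟩, some ⟨k', q⟩ =>
      if k = k' then
        if p.val = q.val then 2
        else if p.val + 1 = q.val ∨ q.val + 1 = p.val then -1
        else 0
      else 0

/-- The vector `v` with `v_b = 1` and `v_{(k,p)} = 1 - p/a_k`. -/
def vWeight (a : Fin 3 → ℕ) : JIdx a → ℚ := fun i =>
  match i with
  | none => 1
  | some ⟨k, p⟩ => 1 - ((p.val : ℚ) + 1) / (a k : ℚ)

lemma hub_sum (a : ℕ) (ha : 0 < a) :
    ∑ q ∈ Finset.range (a - 1),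
      ((if q = 0 then (-1 : ℚ) else 0) * (1 - ((q : ℚ) + 1) / a)) = 1 / a - 1 := by
  rcases Nat.lt_or_ge a 2 with h2 | h2
  · interval_cases a
    simp
  · have hn : a - 1 = (a - 2) + 1 := by omega
    have haQ : (a : ℚ) ≠ 0 := by positivity
    rw [hn, Finset.sum_range_succ']
    rw [Finset.sum_eq_zero (by intro x _; simp)]
    push_cast
    field_simp
    ring

lemma branch_sum (a : ℕ) (ha : 0 < a) (P : ℕ) (hP : P < a - 1) :
    (if P = 0 then (-1 : ℚ) else 0) +
      ∑ q ∈ Finset.range (a - 1),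
        ((if P = q then (2 : ℚ) else if P + 1 = q ∨ q + 1 = P then -1 else 0) *
          (1 - ((q : ℚ) + 1) / a)) = 0 := by
  have haQ : (a : ℚ) ≠ 0 := by positivity
  have hsplit : ∀ q ∈ Finset.range (a - 1),
      ((if P = q then (2 : ℚ) else if P + 1 = q ∨ q + 1 = P then -1 else 0) *
          (1 - ((q : ℚ) + 1) / a)) =
      (if P = q then 2 * (1 - ((q : ℚ) + 1) / a) else 0) +
      ((if P + 1 = q then -(1 - ((q : ℚ) + 1) / a) else 0) +
       (if q + 1 = P then -(1 - ((q : ℚ) + 1) / a) else 0)) := by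
    intro q _
    split_ifs <;> first | ring1 | (exfalso; omega)
  rw [Finset.sum_congr rfl hsplit, Finset.sum_add_distrib, Finset.sum_add_distrib,
    Finset.sum_ite_eq, Finset.sum_ite_eq]
  have hPm : P ∈ Finset.range (a - 1) := Finset.mem_range.mpr hP
  rw [if_pos hPm]
  rcases Nat.eq_zero_or_pos P with hP0 | hP0
  · subst hP0
    rw [Finset.sum_eq_zero (by intro x _; simp)]
    rcases Nat.lt_or_ge (a - 1) 2 with h2 | h2
    · have h2' : a = 2 := by omega
      subst h2'
      norm_num [Finset.mem_range]
    · rw [if_pos (Finset.mem_range.mpr (by omega : 0 + 1 < a - 1))]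
      push_cast
      field_simp
      ring
  · obtain ⟨m, rfl⟩ : ∃ m, P = m + 1 := ⟨P - 1, by omega⟩
    have hg3 : ∀ q ∈ Finset.range (a - 1),
        (if q + 1 = m + 1 then -(1 - ((q : ℚ) + 1) / a) else 0) =
        (if m = q then -(1 - ((q : ℚ) + 1) / a) else 0) := by
      intro q _
      split_ifs <;> first | ring1 | (exfalso; omega)
    rw [Finset.sum_congr rfl hg3, Finset.sum_ite_eq,
      if_pos (Finset.mem_range.mpr (by omega : m < a - 1))]
    rcases Nat.lt_or_ge (m + 1 + 1) (a - 1) with h2 | h2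
    · rw [if_pos (Finset.mem_range.mpr h2), if_neg (by omega : ¬ m + 1 = 0)]
      push_cast
      field_simp
      ring
    · have hmem : m + 1 + 1 ∉ Finset.range (a - 1) := by
        simp only [Finset.mem_range]; omega
      rw [if_neg hmem, if_neg (by omega : ¬ m + 1 = 0)]
      have hm : (m : ℚ) + 2 = (a : ℚ) - 1 := by
        have h3 : m + 2 = a - 1 := by omega
        have h4 := congrArg (fun n : ℕ => (n : ℚ)) h3
        push_cast [Nat.cast_sub (by omega : 1 ≤ a)] at h4
        linarith
      field_simp
      push_cast
      linarith [hm]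

/-- `C · v = χ · e_b` where `χ = 1/a₁ + 1/a₂ + 1/a₃ - 1` and `e_b` is the standard basis
vector at the branching index. -/
theorem stmt0 (a : Fin 3 → ℕ) (ha : ∀ k, 0 < a k) :
    (Cartan a).mulVec (vWeight a) =
      fun i => ((1 : ℚ) / (a 0) + 1 / (a 1) + 1 / (a 2) - 1) *
        (if i = none then 1 else 0) := by
  funext i
  rw [Matrix.mulVec]
  cases i with
  | none =>
    simp only [dotProduct, Fintype.sum_option, Cartan, vWeight,
      Matrix.of_apply, if_pos rfl, mul_one, if_true]
    rw [← Finset.univ_sigma_univ, Finset.sum_sigma, Fin.sum_univ_three]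
    have hk : ∀ k : Fin 3,
        (∑ q : Fin (a k - 1), (if (q : ℕ) = 0 then (-1 : ℚ) else 0) *
          (1 - ((q : ℚ) + 1) / (a k))) = 1 / (a k) - 1 := by
      intro k
      rw [Fin.sum_univ_eq_sum_range (fun q => (if q = 0 then (-1 : ℚ) else 0) *
        (1 - ((q : ℚ) + 1) / (a k)))]
      exact hub_sum (a k) (ha k)
    rw [hk 0, hk 1, hk 2]
    ring
  | some kp =>
    obtain ⟨k, p⟩ := kp
    simp only [dotProduct, Fintype.sum_option, Cartan, vWeight,
      Matrix.of_apply, mul_one, reduceCtorEq, if_false, mul_zero]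
    rw [← Finset.univ_sigma_univ, Finset.sum_sigma]
    rw [Fintype.sum_eq_single k (fun k' hne => Finset.sum_eq_zero fun q _ => by
      rw [if_neg (fun h => hne h.symm), zero_mul])]
    have e1 : (∑ q : Fin (a k - 1),
        (if k = k then
          if (p : ℕ) = (q : ℕ) then (2 : ℚ)
          else if (p : ℕ) + 1 = (q : ℕ) ∨ (q : ℕ) + 1 = (p : ℕ) then -1 else 0
        else 0) * (1 - ((q : ℚ) + 1) / (a k))) =
        ∑ q : Fin (a k - 1),
          (if (p : ℕ) = (q : ℕ) then (2 : ℚ)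
            else if (p : ℕ) + 1 = (q : ℕ) ∨ (q : ℕ) + 1 = (p : ℕ) then -1 else 0) *
          (1 - ((q : ℚ) + 1) / (a k)) :=
      Finset.sum_congr rfl (fun q _ => by rw [if_pos rfl])
    rw [e1, Fin.sum_univ_eq_sum_range (fun q =>
      (if (p : ℕ) = q then (2 : ℚ)
        else if (p : ℕ) + 1 = q ∨ q + 1 = (p : ℕ) then -1 else 0) *
        (1 - ((q : ℚ) + 1) / (a k)))]
    exact branch_sum (a k) (ha k) (p : ℕ) p.isLt
end

section
/- Let a ≥ 2 be an integer and let σ be the (a−1)×(a−1) matrix over ℚ with σ_{p,1} = −1 for all 1 ≤ p ≤ a−1, σ_{p,p+1} = 1 for 1 ≤ p ≤ a−2, and all other entries 0. Then I − σ is invertible and [(I − σ)⁻¹]_{p,q} = p/a − ε_{p,q}, where ε_{p,q} = 1 if p > q and ε_{p,q} = 0 if p ≤ q. -/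
open scoped BigOperators

/-- The matrix of the Coxeter transformation of `A_{a-1}` in the simple-root basis:
`σ_{p,1} = -1` for all `p`, `σ_{p,p+1} = 1`, all other entries `0`.
(Indices are 0-based: row `p` encodes `p.val + 1`, column `q` encodes `q.val + 1`.) -/
def sigmaMat (a : ℕ) : Matrix (Fin (a - 1)) (Fin (a - 1)) ℚ :=
  Matrix.of fun p q =>
    (if q.val = 0 then -1 else 0) + (if q.val = p.val + 1 then 1 else 0)

def invMat (a : ℕ) : Matrix (Fin (a - 1)) (Fin (a - 1)) ℚ :=
  Matrix.of (fun p q : Fin (a - 1) =>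
    ((p.val : ℚ) + 1) / (a : ℚ) - (if q.val < p.val then 1 else 0))

lemma key (a : ℕ) (ha : 2 ≤ a) : (1 - sigmaMat a) * invMat a = 1 := by
  have hn : 0 < a - 1 := by omega
  have haQ : (a : ℚ) ≠ 0 := by positivity
  ext i j
  rw [Matrix.mul_apply]
  set g : Fin (a-1) → ℚ := fun q => ((q.val : ℚ) + 1) / (a : ℚ) - (if j.val < q.val then 1 else 0) with hg
  have hterm : ∀ q, (1 - sigmaMat a) i q * invMat a q j
      = ((if q = i then g q else 0) + (if q = (⟨0, hn⟩ : Fin (a-1)) then g q else 0))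
        - (if q.val = i.val + 1 then g q else 0) := by
    intro q
    have hcoef : (1 - sigmaMat a) i q
        = ((if q = i then 1 else 0) + (if q = (⟨0, hn⟩ : Fin (a-1)) then 1 else 0))
          - (if q.val = i.val + 1 then (1:ℚ) else 0) := by
      have h0 : (q = (⟨0, hn⟩ : Fin (a-1))) ↔ q.val = 0 := by
        rw [Fin.ext_iff]
      have h1 : (i = q) ↔ (q = i) := eq_comm
      simp only [Matrix.sub_apply, Matrix.one_apply, sigmaMat, Matrix.of_apply, h0, h1]
      split_ifs <;> ring
    have : invMat a q j = g q := rfl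
    rw [hcoef, this]
    split_ifs <;> ring
  rw [Finset.sum_congr rfl (fun q _ => hterm q)]
  rw [Finset.sum_sub_distrib, Finset.sum_add_distrib,
    Finset.sum_ite_eq' Finset.univ i g, Finset.sum_ite_eq' Finset.univ (⟨0, hn⟩ : Fin (a-1)) g]
  simp only [Finset.mem_univ, if_true]
  by_cases hilast : i.val + 1 < a - 1
  · have hsum3 : ∑ q : Fin (a-1), (if q.val = i.val + 1 then g q else 0)
        = g ⟨i.val + 1, hilast⟩ := by
      have : ∀ q : Fin (a-1), (if q.val = i.val + 1 then g q else 0)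
          = (if q = ⟨i.val + 1, hilast⟩ then g q else 0) := by
        intro q; congr 1; rw [Fin.ext_iff]
      rw [Finset.sum_congr rfl (fun q _ => this q),
        Finset.sum_ite_eq' Finset.univ (⟨i.val + 1, hilast⟩ : Fin (a-1)) g]
      simp
    rw [hsum3]
    simp only [hg, Matrix.one_apply]
    by_cases hij : i = j
    · subst hij
      have e1 : ¬ (i.val < i.val) := lt_irrefl _
      have e2 : ¬ (i.val < 0) := by omega
      have e3 : (i.val < i.val + 1) := by omega
      rw [if_pos rfl, if_neg e1, if_neg e2, if_pos e3]
      field_simp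
      push_cast; ring
    · rw [if_neg hij]
      have hij' : i.val ≠ j.val := fun h => hij (Fin.ext h)
      rcases lt_or_gt_of_ne hij' with h | h
      · have e1 : ¬ (j.val < i.val) := by omega
        have e2 : ¬ (j.val < 0) := by omega
        have e3 : ¬ (j.val < i.val + 1) := by omega
        rw [if_neg e1, if_neg e2, if_neg e3]
        push_cast
        field_simp
        ring
      · have e1 : (j.val < i.val) := h
        have e3 : (j.val < i.val + 1) := by omega
        rw [if_pos e1, if_neg (by omega : ¬ (j.val < 0)), if_pos e3]
        push_cast
        field_simp
        ring
  · have hival : i.val + 2 = a := by have := i.isLt; omega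
    have hzero : ∑ q : Fin (a-1), (if q.val = i.val + 1 then g q else 0) = 0 := by
      apply Finset.sum_eq_zero
      intro q _
      have : q.val ≠ i.val + 1 := by have := q.isLt; omega
      simp [this]
    rw [hzero]
    simp only [hg, Matrix.one_apply]
    have ecast : ((i.val : ℚ) + 1 + 1) = (a : ℚ) := by
      push_cast [← hival]; ring
    have e2 : ¬ (j.val < 0) := by omega
    by_cases hij : i = j
    · subst hij
      rw [if_pos rfl, if_neg (lt_irrefl _), if_neg e2]
      field_simp
      push_cast
      linarith [ecast]
    · rw [if_neg hij]
      have h : j.val < i.val := by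
        have h1 := j.isLt
        have hne : i.val ≠ j.val := fun hh => hij (Fin.ext hh)
        omega
      rw [if_pos h, if_neg e2]
      field_simp
      push_cast
      linarith [ecast]

/-- `I - σ` is invertible and `[(I - σ)⁻¹]_{p,q} = p/a - ε_{p,q}` with `ε_{p,q} = 1` if
`p > q` and `0` otherwise. -/
theorem stmt4 (a : ℕ) (ha : 2 ≤ a) :
    IsUnit (1 - sigmaMat a) ∧
    (1 - sigmaMat a)⁻¹ =
      Matrix.of (fun p q : Fin (a - 1) =>
        ((p.val : ℚ) + 1) / (a : ℚ) - (if q.val < p.val then 1 else 0)) := by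
  have h := key a ha
  exact ⟨(Matrix.isUnit_iff_isUnit_det _).mpr (Matrix.isUnit_det_of_right_inverse h), Matrix.inv_eq_right_inv h⟩
end

section
/- Let u, λ, μ be real numbers with λ > μ > u. For each integer n ≥ 0 set A_n = (−1)ⁿ · (∏_{j=1}^{n}(2j−1)) · 2^{−n+1/2} · (λ−u)^{−n−1/2} and B_n = 2^{n+3/2} · (∏_{j=0}^{n}(2j+1))^{−1} · (μ−u)^{n+1/2}. Then the series Σ_{n=0}^{∞} (−1)^{n+1} A_n B_n converges absolutely and exp( Σ_{n=0}^{∞} (−1)^{n+1} A_n B_n ) = ( (√(λ−u) − √(μ−u)) / (√(λ−u) + √(μ−u)) )². -/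
open scoped BigOperators

lemma prod_odd_shift (n : ℕ) :
    (∏ j ∈ Finset.range (n + 1), (2 * (j : ℝ) + 1)) =
      (∏ j ∈ Finset.Icc 1 n, (2 * (j : ℝ) - 1)) * (2 * n + 1) := by
  induction n with
  | zero => simp
  | succ n ih =>
    rw [Finset.prod_range_succ, ih, Finset.prod_Icc_succ_top (by omega)]
    push_cast
    ring

lemma prod_odd_pos (n : ℕ) : 0 < (∏ j ∈ Finset.Icc 1 n, (2 * (j : ℝ) - 1)) := by
  apply Finset.prod_pos
  intro j hj
  have h1 : 1 ≤ j := (Finset.mem_Icc.mp hj).1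
  have : (1 : ℝ) ≤ j := by exact_mod_cast h1
  linarith

/-- For `λ > μ > u`, with `A_n = (-1)ⁿ (2n-1)!! 2^{-n+1/2} (λ-u)^{-n-1/2}` and
`B_n = 2^{n+3/2} ((2n+1)!!)⁻¹ (μ-u)^{n+1/2}`, the series `Σ (-1)^{n+1} A_n B_n` converges
absolutely and its exponential equals `((√(λ-u) - √(μ-u))/(√(λ-u) + √(μ-u)))²`. -/
theorem stmt5 (u lam mu : ℝ) (hmu : mu > u) (hlam : lam > mu)
    (A B : ℕ → ℝ)
    (hA : ∀ n : ℕ, A n =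
      (-1 : ℝ) ^ n * (∏ j ∈ Finset.Icc 1 n, (2 * (j : ℝ) - 1)) *
        (2 : ℝ) ^ (-(n : ℝ) + 1 / 2) * (lam - u) ^ (-(n : ℝ) - 1 / 2))
    (hB : ∀ n : ℕ, B n =
      (2 : ℝ) ^ ((n : ℝ) + 3 / 2) * (∏ j ∈ Finset.range (n + 1), (2 * (j : ℝ) + 1))⁻¹ *
        (mu - u) ^ ((n : ℝ) + 1 / 2)) :
    Summable (fun n : ℕ => |(-1 : ℝ) ^ (n + 1) * A n * B n|) ∧
    Real.exp (∑' n : ℕ, (-1 : ℝ) ^ (n + 1) * A n * B n) =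
      ((Real.sqrt (lam - u) - Real.sqrt (mu - u)) /
        (Real.sqrt (lam - u) + Real.sqrt (mu - u))) ^ 2 := by
  have hLu : (0 : ℝ) < lam - u := by linarith
  have hMu : (0 : ℝ) < mu - u := by linarith
  set a := Real.sqrt (lam - u) with ha
  set b := Real.sqrt (mu - u) with hb
  have hapos : 0 < a := Real.sqrt_pos.mpr hLu
  have hbpos : 0 < b := Real.sqrt_pos.mpr hMu
  have hba : b < a := by
    apply Real.sqrt_lt_sqrt (le_of_lt hMu)
    linarith
  set x : ℝ := b / a with hx
  have hxpos : 0 < x := div_pos hbpos hapos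
  have hxlt : x < 1 := (div_lt_one hapos).mpr hba
  -- key term computation
  have hterm : ∀ n : ℕ, (-1 : ℝ) ^ (n + 1) * A n * B n =
      (-2 : ℝ) * ((2 : ℝ) * (1 / (2 * (n : ℝ) + 1)) * x ^ (2 * n + 1)) := by
    intro n
    rw [hA n, hB n, prod_odd_shift n]
    have hP := prod_odd_pos n
    have h2n : (0 : ℝ) < 2 * (n : ℝ) + 1 := by positivity
    set p := (2 : ℝ) ^ (-(n : ℝ) + 1 / 2) with hp
    set q := (2 : ℝ) ^ ((n : ℝ) + 3 / 2) with hq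
    set s := (lam - u) ^ (-(n : ℝ) - 1 / 2) with hs
    set t := (mu - u) ^ ((n : ℝ) + 1 / 2) with ht
    set P := (∏ j ∈ Finset.Icc 1 n, (2 * (j : ℝ) - 1)) with hPdef
    have hpq : p * q = 4 := by
      rw [hp, hq, ← Real.rpow_add (by norm_num),
        show (-(n:ℝ) + 1/2) + ((n:ℝ) + 3/2) = ((2:ℕ):ℝ) by push_cast; ring,
        Real.rpow_natCast]
      norm_num
    have hst : s * t = x ^ (2 * n + 1) := by
      have hxr : x = ((mu - u) / (lam - u)) ^ ((1:ℝ)/2) := by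
        rw [hx, ha, hb, ← Real.sqrt_div (le_of_lt hMu), Real.sqrt_eq_rpow]
      rw [hxr, ← Real.rpow_natCast (((mu - u) / (lam - u)) ^ ((1:ℝ)/2)) (2*n+1),
        ← Real.rpow_mul (le_of_lt (div_pos hMu hLu)),
        Real.div_rpow (le_of_lt hMu) (le_of_lt hLu), hs, ht,
        show (-(n : ℝ) - 1 / 2) = -((n:ℝ) + 1/2) by ring,
        Real.rpow_neg (le_of_lt hLu)]
      push_cast
      rw [show (1:ℝ)/2 * (2*(n:ℝ)+1) = (n:ℝ) + 1/2 by ring]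
      field_simp
    have h1 : (-1 : ℝ) ^ (n + 1) * (-1 : ℝ) ^ n = -1 := by
      rw [← pow_add, show n + 1 + n = 2 * n + 1 by ring, pow_succ, pow_mul]
      norm_num
    have hPP : P * (P * (2 * (n : ℝ) + 1))⁻¹ = (2 * (n : ℝ) + 1)⁻¹ := by
      rw [mul_inv, ← mul_assoc, mul_inv_cancel₀ (ne_of_gt hP), one_mul]
    calc (-1 : ℝ) ^ (n + 1) * ((-1 : ℝ) ^ n * P * p * s) *
          (q * (P * (2 * (n : ℝ) + 1))⁻¹ * t)
        = ((-1 : ℝ) ^ (n + 1) * (-1 : ℝ) ^ n) * (P * (P * (2 * (n : ℝ) + 1))⁻¹) *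
            ((p * q) * (s * t)) := by ring
      _ = (-1) * (2 * (n : ℝ) + 1)⁻¹ * (4 * x ^ (2 * n + 1)) := by
          rw [h1, hPP, hpq, hst]
      _ = (-2 : ℝ) * ((2 : ℝ) * (1 / (2 * (n : ℝ) + 1)) * x ^ (2 * n + 1)) := by
          ring
  have habs : |x| < 1 := by rw [abs_of_pos hxpos]; exact hxlt
  have hs0 := (Real.hasSum_log_sub_log_of_abs_lt_one habs).mul_left (-2 : ℝ)
  have hs1 : HasSum (fun n : ℕ => (-1 : ℝ) ^ (n + 1) * A n * B n)
      ((-2 : ℝ) * (Real.log (1 + x) - Real.log (1 - x))) := by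
    convert hs0 using 2 with n
    · rfl
    exact hterm n
  constructor
  · have : (fun n : ℕ => |(-1 : ℝ) ^ (n + 1) * A n * B n|) =
        fun n : ℕ => -((-1 : ℝ) ^ (n + 1) * A n * B n) := by
      funext n
      rw [abs_of_nonpos]
      rw [hterm n]
      have hnn : 0 ≤ (2 : ℝ) * (1 / (2 * (n : ℝ) + 1)) * x ^ (2 * n + 1) := by positivity
      linarith
    rw [this]
    exact hs1.summable.neg
  · rw [hs1.tsum_eq]
    have h1x : (0 : ℝ) < 1 - x := by linarith
    have h1x' : (0 : ℝ) < 1 + x := by linarith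
    have : (-2 : ℝ) * (Real.log (1 + x) - Real.log (1 - x)) =
        2 * Real.log ((1 - x) / (1 + x)) := by
      rw [Real.log_div (ne_of_gt h1x) (ne_of_gt h1x')]
      ring
    rw [this, show (2 : ℝ) * Real.log ((1 - x) / (1 + x)) =
        ((2 : ℕ) : ℝ) * Real.log ((1 - x) / (1 + x)) by norm_num,
      Real.exp_nat_mul, Real.exp_log (div_pos h1x h1x')]
    congr 1
    rw [hx]
    field_simp
end

section
/- For all k, k' ∈ {1,2,3} and all m, n ∈ ℤ: if k = k', then (v_{k,m} | v_{k,n}) = 2 when m ≡ n (mod a_k) and (v_{k,m} | v_{k,n}) = 1 otherwise; if k ≠ k', then (v_{k,m} | v_{k',n}) = 2 when a_k | m and a_{k'} | n, (v_{k,m} | v_{k',n}) = 0 when a_k ∤ m and a_{k'} ∤ n, and (v_{k,m} | v_{k',n}) = 1 otherwise. Here (x|y) := (r(x), (1−ρ)r(y)) is the intersection form on H. -/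
open scoped BigOperators

noncomputable section

/-- Indices of the twisted sectors: `⟨k, p⟩` encodes `φ_{k, p.val + 1}`. -/
abbrev TwIdx (a : Fin 3 → ℕ) := (k : Fin 3) × Fin (a k - 1)

/-- Index set of the basis `{𝟏, P} ∪ {φ_{k,p}}` of the Chen–Ruan cohomology `H`:
`Sum.inl 0 = 𝟏`, `Sum.inl 1 = P`, `Sum.inr ⟨k,p⟩ = φ_{k,p+1}`. -/
abbrev Idx (a : Fin 3 → ℕ) := Fin 2 ⊕ TwIdx a

/-- The Chen–Ruan cohomology `H` of `ℙ¹_{a₁,a₂,a₃}`, as coordinates on the basis. -/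
abbrev HSp (a : Fin 3 → ℕ) := Idx a → ℂ

/-- The unit class `𝟏`. -/
def eOne (a : Fin 3 → ℕ) : HSp a := fun i => if i = Sum.inl 0 then 1 else 0

/-- The point class `P`. -/
def eP (a : Fin 3 → ℕ) : HSp a := fun i => if i = Sum.inl 1 then 1 else 0

/-- The twisted class `φ_{k,p}` (with `p : Fin (a k - 1)` encoding `p.val + 1`). -/
def ePhi (a : Fin 3 → ℕ) (k : Fin 3) (p : Fin (a k - 1)) : HSp a :=
  fun i => if i = Sum.inr ⟨k, p⟩ then 1 else 0

/-- `d_{k,p} = 1 - p/a_k`. -/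
def dd (a : Fin 3 → ℕ) (k : Fin 3) (p : Fin (a k - 1)) : ℂ :=
  1 - ((p.val : ℂ) + 1) / (a k : ℂ)

/-- `χ = 1/a₁ + 1/a₂ + 1/a₃ - 1`. -/
def chiQ (a : Fin 3 → ℕ) : ℚ := 1 / (a 0) + 1 / (a 1) + 1 / (a 2) - 1

/-- The Poincaré pairing: `(𝟏,P) = 1`, `(φ_{k,p}, φ_{k,a_k-p}) = 1/a_k`
(note `Fin.rev p` encodes `a_k - p`), all other pairings of basis vectors `0`. -/
def pairH (a : Fin 3 → ℕ) (x y : HSp a) : ℂ :=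
  x (Sum.inl 0) * y (Sum.inl 1) + x (Sum.inl 1) * y (Sum.inl 0) +
    ∑ k : Fin 3, ∑ p : Fin (a k - 1),
      (1 / (a k : ℂ)) * x (Sum.inr ⟨k, p⟩) * y (Sum.inr ⟨k, p.rev⟩)

/-- The operator `ρ`: `ρ(𝟏) = χP`, `ρ(P) = 0`, `ρ(φ_{k,p}) = 0`. -/
def rhoOp (a : Fin 3 → ℕ) (x : HSp a) : HSp a :=
  fun i => if i = Sum.inl 1 then (chiQ a : ℂ) * x (Sum.inl 0) else 0

/-- The operator `r`: `r(𝟏) = 𝟏 + χP`, `r(P) = 0`, `r(φ_{k,p}) = d_{k,p}·φ_{k,p}`. -/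
def rOp (a : Fin 3 → ℕ) (x : HSp a) : HSp a := fun i =>
  match i with
  | Sum.inl j => if j = 0 then x (Sum.inl 0) else (chiQ a : ℂ) * x (Sum.inl 0)
  | Sum.inr ⟨k, p⟩ => dd a k p * x (Sum.inr ⟨k, p⟩)

/-- The intersection form `(x|y) := (r(x), (1-ρ)r(y))`. -/
def iform (a : Fin 3 → ℕ) (x y : HSp a) : ℂ :=
  pairH a (rOp a x) (rOp a y - rhoOp a (rOp a y))

/-- The calibrated period `v_{k,m} = Ĩ^{(-1)}_{α_{k,m}}(1)`:
`v_{k,m} = 𝟏 + (2πi·m/a_k)·P + Σ_{j,p} c_{j,p}·φ_{j,p}` with `c_{j,p} = 1/d_{j,p}` for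
`j ≠ k` and `c_{k,p} = e^{2πi·m·d_{k,p}}/d_{k,p}`. -/
def vv (a : Fin 3 → ℕ) (k : Fin 3) (m : ℤ) : HSp a := fun i =>
  match i with
  | Sum.inl j =>
      if j = 0 then 1 else 2 * (Real.pi : ℂ) * Complex.I * (m : ℂ) / (a k : ℂ)
  | Sum.inr ⟨j, p⟩ =>
      if j = k then
        Complex.exp (2 * (Real.pi : ℂ) * Complex.I * (m : ℂ) * dd a j p) / dd a j p
      else 1 / dd a j p

private lemma geomAux (N : ℕ) (hN : 0 < N) (z : ℂ) (hz : z ^ N = 1) :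
    ∑ p : Fin (N - 1), z ^ (p.val + 1) = if z = 1 then (N : ℂ) - 1 else -1 := by
  rw [Fin.sum_univ_eq_sum_range (fun i => z ^ (i + 1))]
  split_ifs with h
  · subst h; simp [Nat.cast_sub hN]
  · have h0 : ∑ q ∈ Finset.range N, z ^ q = 0 := by
      rw [geom_sum_eq h, hz]; simp
    have h1 := Finset.sum_range_succ' (fun q => z ^ q) (N - 1)
    rw [Nat.sub_add_cancel hN, h0] at h1
    simp only [pow_zero] at h1
    linear_combination -h1

private lemma expSum (N : ℕ) (hN : 0 < N) (e : ℤ) :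
    ∑ p : Fin (N - 1),
      Complex.exp (2 * (Real.pi:ℂ) * Complex.I * (e:ℂ) * ((p.val:ℂ) + 1) / (N:ℂ)) =
      if (N:ℤ) ∣ e then (N:ℂ) - 1 else -1 := by
  have hN0 : (N : ℂ) ≠ 0 := Nat.cast_ne_zero.mpr hN.ne'
  have hpi : (Real.pi : ℂ) ≠ 0 := by exact_mod_cast Real.pi_ne_zero
  have hz : (Complex.exp (2 * (Real.pi:ℂ) * Complex.I * (e:ℂ) / (N:ℂ))) ^ N = 1 := by
    rw [← Complex.exp_nat_mul]
    have h2 : (N:ℂ) * (2 * (Real.pi:ℂ) * Complex.I * (e:ℂ) / (N:ℂ)) =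
        (e:ℂ) * (2 * (Real.pi:ℂ) * Complex.I) := by field_simp
    rw [h2, Complex.exp_int_mul_two_pi_mul_I]
  have hiff : Complex.exp (2 * (Real.pi:ℂ) * Complex.I * (e:ℂ) / (N:ℂ)) = 1 ↔ (N:ℤ) ∣ e := by
    rw [Complex.exp_eq_one_iff]
    constructor
    · rintro ⟨c, hc⟩
      refine ⟨c, ?_⟩
      have h3 : (e : ℂ) = (N : ℂ) * (c : ℂ) := by
        field_simp at hc
        have hne : (2 * (Real.pi:ℂ) * Complex.I) ≠ 0 := by
          simp [hpi, Complex.I_ne_zero]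
        have h4 : (2 * (Real.pi:ℂ) * Complex.I) * (e:ℂ) =
            (2 * (Real.pi:ℂ) * Complex.I) * ((N:ℂ) * (c:ℂ)) := by linear_combination (2 * (Real.pi:ℂ) * Complex.I) * hc
        exact mul_left_cancel₀ hne h4
      exact_mod_cast h3
    · rintro ⟨c, rfl⟩
      exact ⟨c, by field_simp; norm_cast⟩
  calc ∑ p : Fin (N - 1),
      Complex.exp (2 * (Real.pi:ℂ) * Complex.I * (e:ℂ) * ((p.val:ℂ) + 1) / (N:ℂ))
      = ∑ p : Fin (N - 1),
        (Complex.exp (2 * (Real.pi:ℂ) * Complex.I * (e:ℂ) / (N:ℂ))) ^ (p.val + 1) := by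
        refine Finset.sum_congr rfl fun p _ => ?_
        rw [← Complex.exp_nat_mul]
        congr 1
        push_cast
        ring
    _ = _ := by rw [geomAux N hN _ hz]; simp only [hiff]

private lemma iform_vv (a : Fin 3 → ℕ) (ha : ∀ k, 0 < a k) (k k' : Fin 3) (m n : ℤ) :
    iform a (vv a k m) (vv a k' n) =
      (∑ j : Fin 3, if (a j : ℤ) ∣ ((if j = k then -m else 0) + (if j = k' then n else 0))
        then (1:ℂ) else 0) - 1 := by
  have haC : ∀ j, (a j : ℂ) ≠ 0 := fun j => Nat.cast_ne_zero.mpr (ha j).ne'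
  have hrev : ∀ j (p : Fin (a j - 1)), dd a j p.rev = ((p.val:ℂ) + 1) / (a j : ℂ) := by
    intro j p
    have hlt := p.isLt
    rw [dd, Fin.val_rev]
    rw [Nat.cast_sub (by omega), Nat.cast_sub (by omega)]
    push_cast
    field_simp [haC j]
    ring
  have hdd : ∀ j (p : Fin (a j - 1)), dd a j p ≠ 0 := by
    intro j p h
    have hlt := p.isLt
    rw [dd, sub_eq_zero, eq_div_iff (haC j), one_mul] at h
    have h3 : (a j : ℕ) = p.val + 1 := by exact_mod_cast h
    omega
  have hcan : ∀ (x y : ℂ), y ≠ 0 → y * (x / y) = x := by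
    intro x y hy; field_simp
  -- term computation
  have hterm : ∀ (j : Fin 3) (p : Fin (a j - 1)),
      (dd a j p * vv a k m (Sum.inr ⟨j, p⟩)) *
        (dd a j p.rev * vv a k' n (Sum.inr ⟨j, p.rev⟩)) =
      Complex.exp (2 * (Real.pi:ℂ) * Complex.I *
        (((if j = k then -m else 0) + (if j = k' then n else 0) : ℤ) : ℂ) *
        ((p.val:ℂ) + 1) / (a j : ℂ)) := by
    intro j p
    have hp := hdd j p
    have hpr := hdd j p.rev
    simp only [vv]
    by_cases hjk : j = k
    · subst hjk
      by_cases hjk' : j = k'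
      · subst hjk'
        simp only [eq_self_iff_true, if_true]
        rw [hcan _ _ hp, hcan _ _ hpr, ← Complex.exp_add]
        rw [show 2 * (Real.pi:ℂ) * Complex.I * (m:ℂ) * dd a j p +
              2 * (Real.pi:ℂ) * Complex.I * (n:ℂ) * dd a j p.rev =
            2 * (Real.pi:ℂ) * Complex.I * (((-m + n : ℤ)):ℂ) * ((p.val:ℂ) + 1) / (a j : ℂ)
              + (m:ℤ) * (2 * (Real.pi:ℂ) * Complex.I) from by
          rw [hrev j p]; simp only [dd]; push_cast; ring]
        rw [Complex.exp_add, Complex.exp_int_mul_two_pi_mul_I, mul_one]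
      · simp only [eq_self_iff_true, if_true, if_neg hjk']
        rw [hcan _ _ hp, hcan _ _ hpr, mul_one]
        rw [show 2 * (Real.pi:ℂ) * Complex.I * (m:ℂ) * dd a j p =
            2 * (Real.pi:ℂ) * Complex.I * (((-m + 0 : ℤ)):ℂ) * ((p.val:ℂ) + 1) / (a j : ℂ)
              + (m:ℤ) * (2 * (Real.pi:ℂ) * Complex.I) from by
          simp only [dd]; push_cast; ring]
        rw [Complex.exp_add, Complex.exp_int_mul_two_pi_mul_I, mul_one]
    · by_cases hjk' : j = k'
      · subst hjk'
        simp only [eq_self_iff_true, if_true, if_neg hjk]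
        rw [hcan _ _ hp, hcan _ _ hpr, one_mul]
        congr 1
        rw [hrev j p]; push_cast; ring
      · simp only [if_neg hjk, if_neg hjk']
        rw [hcan _ _ hp, hcan _ _ hpr, one_mul]
        rw [show 2 * (Real.pi:ℂ) * Complex.I * (((0 + 0 : ℤ)):ℂ) * ((p.val:ℂ) + 1) / (a j : ℂ)
            = 0 from by push_cast; ring]
        rw [Complex.exp_zero]
  -- evaluations at untwisted classes
  have hx0 : rOp a (vv a k m) (Sum.inl 0) = 1 := by simp [rOp, vv]
  have hx1 : rOp a (vv a k m) (Sum.inl 1) = (chiQ a : ℂ) := by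
    simp [rOp, vv]
  set w := rOp a (vv a k' n) - rhoOp a (rOp a (vv a k' n)) with hw
  have hw0 : w (Sum.inl 0) = 1 := by simp [hw, rOp, rhoOp, vv, Pi.sub_apply]
  have hw1 : w (Sum.inl 1) = 0 := by simp [hw, rOp, rhoOp, vv, Pi.sub_apply]
  have hwφ : ∀ (j : Fin 3) (p : Fin (a j - 1)),
      w (Sum.inr ⟨j, p⟩) = dd a j p * vv a k' n (Sum.inr ⟨j, p⟩) := by
    intro j p; simp [hw, rOp, rhoOp, Pi.sub_apply]
  have hxφ : ∀ (j : Fin 3) (p : Fin (a j - 1)),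
      rOp a (vv a k m) (Sum.inr ⟨j, p⟩) = dd a j p * vv a k m (Sum.inr ⟨j, p⟩) := by
    intro j p; simp [rOp]
  rw [iform, pairH, ← hw, hx0, hx1, hw0, hw1]
  have hsum : ∀ j : Fin 3,
      ∑ p : Fin (a j - 1),
        (1 / (a j : ℂ)) * rOp a (vv a k m) (Sum.inr ⟨j, p⟩) * w (Sum.inr ⟨j, p.rev⟩) =
      (if (a j : ℤ) ∣ ((if j = k then -m else 0) + (if j = k' then n else 0))
        then (1:ℂ) else 0) - 1 / (a j : ℂ) := by
    intro j
    have heach : ∀ p : Fin (a j - 1),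
        (1 / (a j : ℂ)) * rOp a (vv a k m) (Sum.inr ⟨j, p⟩) * w (Sum.inr ⟨j, p.rev⟩) =
        (1 / (a j : ℂ)) * Complex.exp (2 * (Real.pi:ℂ) * Complex.I *
          (((if j = k then -m else 0) + (if j = k' then n else 0) : ℤ) : ℂ) *
          ((p.val:ℂ) + 1) / (a j : ℂ)) := by
      intro p
      rw [hxφ, hwφ, mul_assoc, hterm]
    rw [Finset.sum_congr rfl (fun p _ => heach p), ← Finset.mul_sum,
      expSum (a j) (ha j) _]
    split_ifs with h <;> field_simp [haC j] <;> ring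
  rw [Finset.sum_congr rfl (fun j _ => hsum j), Finset.sum_sub_distrib]
  have hchi : (chiQ a : ℂ) = 1/(a 0 : ℂ) + 1/(a 1 : ℂ) + 1/(a 2 : ℂ) - 1 := by
    rw [chiQ]; push_cast; ring
  rw [hchi, Fin.sum_univ_three (fun j => 1 / (a j : ℂ))]
  ring

/-- Intersection numbers of the cycles `α_{k,m}`:
`(α_{k,m}|α_{k,n}) = 2` if `m ≡ n (mod a_k)` and `1` otherwise; for `k ≠ k'`,
`(α_{k,m}|α_{k',n}) = 2` if `a_k ∣ m` and `a_{k'} ∣ n`, `0` if `a_k ∤ m` and `a_{k'} ∤ n`,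
and `1` otherwise. -/
theorem stmt6 (a : Fin 3 → ℕ) (ha : ∀ k, 0 < a k) (k k' : Fin 3) (m n : ℤ) :
    (k = k' →
      iform a (vv a k m) (vv a k' n) =
        if m % (a k : ℤ) = n % (a k : ℤ) then 2 else 1) ∧
    (k ≠ k' →
      iform a (vv a k m) (vv a k' n) =
        if m % (a k : ℤ) = 0 ∧ n % (a k' : ℤ) = 0 then 2
        else if m % (a k : ℤ) ≠ 0 ∧ n % (a k' : ℤ) ≠ 0 then 0
        else 1) := by
  constructor
  · intro h
    subst h
    rw [iform_vv a ha k k m n]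
    have hiff : (m % (a k:ℤ) = n % (a k:ℤ)) ↔ ((a k:ℤ) ∣ (-m + n)) := by
      rw [Int.emod_eq_emod_iff_emod_sub_eq_zero, show -m + n = -(m-n) by ring, dvd_neg]
      exact ⟨Int.dvd_of_emod_eq_zero, Int.emod_eq_zero_of_dvd⟩
    simp only [hiff]
    have hind : ∀ j : Fin 3,
        (if (a j : ℤ) ∣ ((if j = k then -m else 0) + (if j = k then n else 0))
          then (1:ℂ) else 0) =
        (if j = k then (if (a k:ℤ) ∣ (-m + n) then (1:ℂ) else 0) - 1 else 0) + 1 := by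
      intro j
      by_cases hj : j = k
      · subst hj; simp only [if_pos rfl]; split_ifs <;> ring
      · simp [hj]
    rw [Finset.sum_congr rfl (fun j _ => hind j), Finset.sum_add_distrib,
      Finset.sum_ite_eq' Finset.univ k
        (fun _ => (if (a k:ℤ) ∣ (-m + n) then (1:ℂ) else 0) - 1)]
    simp only [Finset.mem_univ, if_true, Finset.sum_const, Finset.card_univ,
      Fintype.card_fin, nsmul_eq_mul]
    split_ifs <;> norm_num
  · intro hkk
    rw [iform_vv a ha k k' m n]
    have h1 : (m % (a k:ℤ) = 0) ↔ ((a k:ℤ) ∣ (-m + 0)) := by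
      rw [add_zero, dvd_neg]
      exact ⟨Int.dvd_of_emod_eq_zero, Int.emod_eq_zero_of_dvd⟩
    have h2 : (n % (a k':ℤ) = 0) ↔ ((a k':ℤ) ∣ (0 + n)) := by
      rw [zero_add]
      exact ⟨Int.dvd_of_emod_eq_zero, Int.emod_eq_zero_of_dvd⟩
    simp only [ne_eq, h1, h2]
    set A : ℂ := if (a k:ℤ) ∣ (-m + 0) then (1:ℂ) else 0 with hA
    set B : ℂ := if (a k':ℤ) ∣ (0 + n) then (1:ℂ) else 0 with hB
    have hind : ∀ j : Fin 3,
        (if (a j : ℤ) ∣ ((if j = k then -m else 0) + (if j = k' then n else 0))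
          then (1:ℂ) else 0) =
        (if j = k then A - 1 else 0) + (if j = k' then B - 1 else 0) + 1 := by
      intro j
      by_cases hj : j = k
      · subst hj
        rw [if_pos rfl, if_pos rfl, if_neg hkk, if_neg hkk, hA, add_zero]
        split_ifs <;> ring
      · by_cases hj' : j = k'
        · subst hj'
          rw [if_neg hj, if_neg hj, if_pos rfl, if_pos rfl, hB, zero_add]
          split_ifs <;> ring
        · simp [hj, hj']
    rw [Finset.sum_congr rfl (fun j _ => hind j), Finset.sum_add_distrib,
      Finset.sum_add_distrib, Finset.sum_ite_eq' Finset.univ k (fun _ => A - 1),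
      Finset.sum_ite_eq' Finset.univ k' (fun _ => B - 1)]
    simp only [Finset.mem_univ, if_true, Finset.sum_const, Finset.card_univ,
      Fintype.card_fin, nsmul_eq_mul]
    rw [hA, hB]
    split_ifs <;> first | tauto | norm_num
end
end

section
/- Set w_b := v_{1,0} and w_{k,p} := v_{k,−p} − v_{k,−p+1} for 1 ≤ k ≤ 3 and 1 ≤ p ≤ a_k−1. Then, with respect to the intersection form (x|y) := (r(x), (1−ρ)r(y)) on H: (w_b|w_b) = 2; (w_b|w_{k,1}) = −1 and (w_b|w_{k,p}) = 0 for p ≥ 2; (w_{k,p}|w_{k,q}) = 2 if p = q, −1 if |p−q| = 1, and 0 otherwise; and (w_{k,p}|w_{k',q}) = 0 whenever k ≠ k'. That is, the Gram matrix of the family (w_b; w_{k,p}) is the Cartan matrix of the T-shaped tree T(a₁,a₂,a₃). Moreover (P|x) = 0 for every x ∈ H, and if χ ≠ 0 then every x ∈ H with (x|y) = 0 for all y ∈ H is a scalar multiple of P. -/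
open scoped BigOperators

noncomputable section

/-- `w_b := v_{1,0}`. -/
def wB (a : Fin 3 → ℕ) : HSp a := vv a 0 0

/-- `w_{k,p} := v_{k,-p} - v_{k,-p+1}` (with `p : Fin (a k - 1)` encoding `p.val + 1`). -/
def wT (a : Fin 3 → ℕ) (k : Fin 3) (p : Fin (a k - 1)) : HSp a :=
  vv a k (-((p.val : ℤ) + 1)) - vv a k (-((p.val : ℤ) + 1) + 1)

section Helpers

variable (a : Fin 3 → ℕ)

/-- `ω_k = e^{2πi/a_k}`. -/
def om (k : Fin 3) : ℂ := Complex.exp (2 * (Real.pi : ℂ) * Complex.I / (a k))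

lemma om_ne_zero (k : Fin 3) : om a k ≠ 0 := Complex.exp_ne_zero _

lemma om_zpow (k : Fin 3) (s : ℤ) :
    om a k ^ s = Complex.exp ((s : ℂ) * (2 * (Real.pi : ℂ) * Complex.I / (a k))) := by
  rw [Complex.exp_int_mul]; rfl

lemma om_prim (k : Fin 3) (hk : 0 < a k) : IsPrimitiveRoot (om a k) (a k) :=
  Complex.isPrimitiveRoot_exp _ hk.ne'

lemma om_zpow_eq_one_iff (k : Fin 3) (hk : 0 < a k) (s : ℤ) :
    om a k ^ s = 1 ↔ (a k : ℤ) ∣ s :=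
  (om_prim a k hk).zpow_eq_one_iff_dvd s

lemma om_pow_a (k : Fin 3) (hk : 0 < a k) : om a k ^ (a k : ℤ) = 1 :=
  (om_zpow_eq_one_iff a k hk _).mpr ⟨1, by ring⟩

/-- geometric sum of powers of ω over a full period -/
lemma sum_om_range (k : Fin 3) (hk : 0 < a k) (s : ℤ) :
    ∑ q ∈ Finset.range (a k), om a k ^ (s * q) =
      if (a k : ℤ) ∣ s then (a k : ℂ) else 0 := by
  by_cases hd : (a k : ℤ) ∣ s
  · simp only [hd, if_true]
    have : ∀ q ∈ Finset.range (a k), om a k ^ (s * (q : ℤ)) = 1 := by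
      intro q _
      rw [om_zpow_eq_one_iff a k hk]
      exact Dvd.dvd.mul_right hd _
    rw [Finset.sum_congr rfl this]
    simp
  · simp only [hd, if_false]
    have hz : om a k ^ s ≠ 1 := fun h => hd ((om_zpow_eq_one_iff a k hk s).mp h)
    have hconv : ∀ q ∈ Finset.range (a k), om a k ^ (s * (q : ℤ)) = (om a k ^ s) ^ q := by
      intro q _
      rw [← zpow_natCast (om a k ^ s) q, ← zpow_mul]
    rw [Finset.sum_congr rfl hconv, geom_sum_eq hz]
    have hone : (om a k ^ s) ^ (a k) = 1 := by
      rw [← zpow_natCast (om a k ^ s) (a k), ← zpow_mul, mul_comm, zpow_mul,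
        om_pow_a a k hk, one_zpow]
    rw [hone]
    simp

/-- the shifted sum `S(s) = Σ_{q} ω^{s(q+1)}`. -/
lemma sum_om (k : Fin 3) (hk : 0 < a k) (s : ℤ) :
    ∑ q : Fin (a k - 1), om a k ^ (s * ((q : ℤ) + 1)) =
      (if (a k : ℤ) ∣ s then (a k : ℂ) else 0) - 1 := by
  obtain ⟨b, hb⟩ : ∃ b, a k = b + 1 := ⟨a k - 1, by omega⟩
  have key := sum_om_range a k hk s
  rw [hb, Finset.sum_range_succ'] at key
  rw [Fin.sum_univ_eq_sum_range (fun q : ℕ => om a k ^ (s * ((q : ℤ) + 1))),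
    show a k - 1 = b from by omega]
  rw [hb]
  push_cast at key ⊢
  have h0 : om a k ^ (s * ((0:ℕ) : ℤ)) = 1 := by norm_num
  push_cast at h0
  linear_combination key - h0

end Helpers
section Helpers2

variable (a : Fin 3 → ℕ)

lemma dd_ne_zero (k : Fin 3) (p : Fin (a k - 1)) : dd a k p ≠ 0 := by
  have hp : (p : ℕ) + 1 < a k := by omega
  have hak : (a k : ℂ) ≠ 0 := Nat.cast_ne_zero.mpr (by omega)
  unfold dd
  rw [sub_ne_zero]
  intro h
  field_simp at h
  have h2 : (((a k : ℕ)) : ℂ) = (((p : ℕ) + 1 : ℕ) : ℂ) := by push_cast; linear_combination h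
  have := Nat.cast_inj (R := ℂ) |>.mp h2
  omega

lemma dd_rev (k : Fin 3) (p : Fin (a k - 1)) :
    dd a k p.rev = ((p : ℕ) + 1 : ℂ) / (a k : ℂ) := by
  have hp : (p : ℕ) + 1 < a k := by omega
  have hak : (a k : ℂ) ≠ 0 := Nat.cast_ne_zero.mpr (by omega)
  unfold dd
  rw [Fin.val_rev]
  have h1 : (a k - 1 - ((p : ℕ) + 1) : ℕ) = a k - p - 2 := by omega
  rw [h1]
  have h2 : ((a k - p - 2 : ℕ) : ℂ) = (a k : ℂ) - (p : ℕ) - 2 := by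
    have h0 : (a k : ℕ) - p - 2 + (p + 2) = a k := by omega
    have h3 := congrArg (Nat.cast (R := ℂ)) h0
    push_cast at h3
    linear_combination h3
  rw [h2]
  field_simp
  ring

/-- closed form of the intersection form -/
lemma iform_eq (x y : HSp a) :
    iform a x y = (chiQ a : ℂ) * x (Sum.inl 0) * y (Sum.inl 0) +
      ∑ k : Fin 3, ∑ p : Fin (a k - 1),
        (1 / (a k : ℂ)) * (dd a k p * x (Sum.inr ⟨k, p⟩)) *
          (dd a k p.rev * y (Sum.inr ⟨k, p.rev⟩)) := by
  unfold iform pairH rOp rhoOp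
  simp only [Pi.sub_apply, reduceCtorEq, if_false, if_true, sub_zero]
  norm_num

end Helpers2
section Helpers3

variable (a : Fin 3 → ℕ)

lemma vv_coeff_same (k : Fin 3) (m : ℤ) (q : Fin (a k - 1)) :
    vv a k m (Sum.inr ⟨k, q⟩) = om a k ^ (-(m * ((q : ℤ) + 1))) / dd a k q := by
  show (if k = k then _ else _) = _
  rw [if_pos rfl]
  congr 1
  rw [om_zpow, show 2 * (Real.pi : ℂ) * Complex.I * (m : ℂ) * dd a k q
      = (m : ℂ) * (2 * (Real.pi : ℂ) * Complex.I) +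
        ((-(m * ((q : ℤ) + 1)) : ℤ) : ℂ) * (2 * (Real.pi : ℂ) * Complex.I / (a k)) from by
    unfold dd; push_cast; ring]
  rw [Complex.exp_add, Complex.exp_int_mul_two_pi_mul_I, one_mul]

lemma vv_coeff_other (k j : Fin 3) (m : ℤ) (q : Fin (a j - 1)) (h : j ≠ k) :
    vv a k m (Sum.inr ⟨j, q⟩) = 1 / dd a j q := by
  show (if j = k then _ else _) = _
  rw [if_neg h]

lemma vv_one (k : Fin 3) (m : ℤ) : vv a k m (Sum.inl 0) = 1 := rfl

lemma wB_one : wB a (Sum.inl 0) = 1 := rfl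

lemma wB_coeff (j : Fin 3) (q : Fin (a j - 1)) :
    wB a (Sum.inr ⟨j, q⟩) = 1 / dd a j q := by
  unfold wB
  by_cases h : j = (0 : Fin 3)
  · subst h
    rw [vv_coeff_same]
    norm_num
  · exact vv_coeff_other a 0 j 0 q h

lemma wT_one (k : Fin 3) (p : Fin (a k - 1)) : wT a k p (Sum.inl 0) = 0 := by
  unfold wT
  show vv a k _ (Sum.inl 0) - vv a k _ (Sum.inl 0) = 0
  rw [vv_one, vv_one, sub_self]

lemma wT_coeff_other (k j : Fin 3) (p : Fin (a k - 1)) (q : Fin (a j - 1)) (h : j ≠ k) :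
    wT a k p (Sum.inr ⟨j, q⟩) = 0 := by
  unfold wT
  show vv a k _ (Sum.inr ⟨j, q⟩) - vv a k _ (Sum.inr ⟨j, q⟩) = 0
  rw [vv_coeff_other a k j _ q h, vv_coeff_other a k j _ q h, sub_self]

lemma wT_coeff_same (k : Fin 3) (p q : Fin (a k - 1)) :
    wT a k p (Sum.inr ⟨k, q⟩) =
      (om a k ^ (((p : ℤ) + 1) * ((q : ℤ) + 1)) - om a k ^ ((p : ℤ) * ((q : ℤ) + 1)))
        / dd a k q := by
  unfold wT
  show vv a k _ (Sum.inr ⟨k, q⟩) - vv a k _ (Sum.inr ⟨k, q⟩) = _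
  rw [vv_coeff_same, vv_coeff_same, div_sub_div_same]
  congr 2
  all_goals ring

lemma om_rev (k : Fin 3) (s : ℤ) (q : Fin (a k - 1)) :
    om a k ^ (s * ((q.rev : ℤ) + 1)) = om a k ^ ((-s) * ((q : ℤ) + 1)) := by
  have hk : 0 < a k := by have := q.isLt; omega
  have hrv : (q.rev : ℕ) = a k - 1 - ((q : ℕ) + 1) := Fin.val_rev q
  have hql : (q : ℕ) < a k - 1 := q.isLt
  have e1 : ((q.rev : ℤ) + 1) = (a k : ℤ) - ((q : ℤ) + 1) := by omega
  rw [e1, show s * ((a k : ℤ) - ((q : ℤ) + 1)) = (a k : ℤ) * s + (-s) * ((q : ℤ) + 1) from by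
    ring, zpow_add₀ (om_ne_zero a k), zpow_mul, om_pow_a a k hk, one_zpow, one_mul]

lemma dvd_iff_eq (k : Fin 3) (p q : Fin (a k - 1)) :
    ((a k : ℤ) ∣ ((p : ℤ) - (q : ℤ))) ↔ p = q := by
  constructor
  · intro h
    have h1 : |(p : ℤ) - (q : ℤ)| < (a k : ℤ) := by
      have := p.isLt; have := q.isLt
      rw [abs_lt]; omega
    have := Int.eq_zero_of_abs_lt_dvd h h1
    have : (p : ℕ) = (q : ℕ) := by omega
    exact Fin.ext this
  · rintro rfl; simp

lemma dvd_iff_succ (k : Fin 3) (p q : Fin (a k - 1)) :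
    ((a k : ℤ) ∣ ((p : ℤ) - (q : ℤ) + 1)) ↔ (p : ℕ) + 1 = (q : ℕ) := by
  constructor
  · intro h
    have h1 : |(p : ℤ) - (q : ℤ) + 1| < (a k : ℤ) := by
      have := p.isLt; have := q.isLt
      rw [abs_lt]; omega
    have := Int.eq_zero_of_abs_lt_dvd h h1
    omega
  · intro h
    have : (p : ℤ) - (q : ℤ) + 1 = 0 := by omega
    rw [this]; exact dvd_zero _

end Helpers3
section MainParts

variable (a : Fin 3 → ℕ)

lemma part1 (ha : ∀ k, 0 < a k) : iform a (wB a) (wB a) = 2 := by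
  rw [iform_eq, wB_one]
  have hterm : ∀ k : Fin 3, ∀ p : Fin (a k - 1),
      (1 / (a k : ℂ)) * (dd a k p * wB a (Sum.inr ⟨k, p⟩)) *
        (dd a k p.rev * wB a (Sum.inr ⟨k, p.rev⟩)) = 1 / (a k : ℂ) := by
    intro k p
    rw [wB_coeff, wB_coeff, mul_one_div_cancel (dd_ne_zero a k p),
      mul_one_div_cancel (dd_ne_zero a k p.rev)]
    ring
  have hsum : ∀ k : Fin 3,
      (∑ p : Fin (a k - 1), (1 / (a k : ℂ)) * (dd a k p * wB a (Sum.inr ⟨k, p⟩)) *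
        (dd a k p.rev * wB a (Sum.inr ⟨k, p.rev⟩))) = ((a k - 1 : ℕ) : ℂ) / (a k : ℂ) := by
    intro k
    rw [Finset.sum_congr rfl (fun p _ => hterm k p)]
    simp [Finset.sum_const, Finset.card_univ, div_eq_mul_inv]
  rw [Fin.sum_univ_three, hsum 0, hsum 1, hsum 2]
  have h0 : ((a 0 - 1 : ℕ) : ℂ) = (a 0 : ℂ) - 1 := by
    rw [Nat.cast_sub (ha 0)]; norm_num
  have h1 : ((a 1 - 1 : ℕ) : ℂ) = (a 1 : ℂ) - 1 := by
    rw [Nat.cast_sub (ha 1)]; norm_num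
  have h2 : ((a 2 - 1 : ℕ) : ℂ) = (a 2 : ℂ) - 1 := by
    rw [Nat.cast_sub (ha 2)]; norm_num
  have hne : ∀ k : Fin 3, (a k : ℂ) ≠ 0 := fun k => Nat.cast_ne_zero.mpr (ha k).ne'
  rw [h0, h1, h2]
  unfold chiQ
  push_cast
  have e : ∀ k : Fin 3, ((a k : ℂ) - 1) / (a k : ℂ) = 1 - 1 / (a k : ℂ) := by
    intro k
    rw [sub_div, div_self (hne k)]
  rw [e 0, e 1, e 2]
  ring

lemma part2 (k : Fin 3) (p : Fin (a k - 1)) :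
    iform a (wB a) (wT a k p) = if (p : ℕ) = 0 then -1 else 0 := by
  have hk : 0 < a k := by have := p.isLt; omega
  have ha2 : 2 ≤ a k := by have := p.isLt; omega
  have hane : (a k : ℂ) ≠ 0 := Nat.cast_ne_zero.mpr hk.ne'
  rw [iform_eq, wT_one, wB_one]
  rw [Fintype.sum_eq_single k (fun j hj => Finset.sum_eq_zero (fun q _ => by
    rw [wT_coeff_other a k j p q.rev hj]; ring))]
  have hterm : ∀ q : Fin (a k - 1),
      (1 / (a k : ℂ)) * (dd a k q * wB a (Sum.inr ⟨k, q⟩)) *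
        (dd a k q.rev * wT a k p (Sum.inr ⟨k, q.rev⟩)) =
      (1 / (a k : ℂ)) * (om a k ^ ((-((p : ℤ) + 1)) * ((q : ℤ) + 1)) -
        om a k ^ ((-(p : ℤ)) * ((q : ℤ) + 1))) := by
    intro q
    rw [wB_coeff, wT_coeff_same, mul_one_div_cancel (dd_ne_zero a k q),
      mul_comm (dd a k q.rev), div_mul_cancel₀ _ (dd_ne_zero a k q.rev),
      om_rev a k ((p : ℤ) + 1) q, om_rev a k (p : ℤ) q]
    ring
  rw [Finset.sum_congr rfl (fun q _ => hterm q), ← Finset.mul_sum,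
    Finset.sum_sub_distrib, sum_om a k hk, sum_om a k hk]
  have hd1 : ¬ ((a k : ℤ) ∣ (-((p : ℤ) + 1))) := by
    intro h
    rw [Int.dvd_neg] at h
    have := Int.eq_zero_of_abs_lt_dvd h (by
      have := p.isLt; rw [abs_lt]; constructor <;> omega)
    omega
  have hd2 : ((a k : ℤ) ∣ (-(p : ℤ))) ↔ (p : ℕ) = 0 := by
    rw [Int.dvd_neg]
    constructor
    · intro h
      have := Int.eq_zero_of_abs_lt_dvd h (by
        have := p.isLt; rw [abs_lt]; constructor <;> omega)
      omega
    · intro h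
      have : ((p : ℕ) : ℤ) = 0 := by omega
      rw [this]; exact dvd_zero _
  rw [if_neg hd1]
  by_cases hp : (p : ℕ) = 0
  · rw [if_pos (hd2.mpr hp), if_pos hp]
    field_simp
    ring
  · rw [if_neg (fun hh => hp (hd2.mp hh)), if_neg hp]
    ring

lemma part4 (k k' : Fin 3) (hkk : k ≠ k') (p : Fin (a k - 1)) (q : Fin (a k' - 1)) :
    iform a (wT a k p) (wT a k' q) = 0 := by
  rw [iform_eq, wT_one, wT_one]
  have : ∀ j : Fin 3, ∀ r : Fin (a j - 1),
      (1 / (a j : ℂ)) * (dd a j r * wT a k p (Sum.inr ⟨j, r⟩)) *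
        (dd a j r.rev * wT a k' q (Sum.inr ⟨j, r.rev⟩)) = 0 := by
    intro j r
    by_cases hj : j = k
    · rw [wT_coeff_other a k' j q r.rev (show j ≠ k' from by rw [hj]; exact hkk)]
      ring
    · rw [wT_coeff_other a k j p r hj]
      ring
  rw [Finset.sum_congr rfl (fun j _ => Finset.sum_congr rfl (fun r _ => this j r))]
  simp

lemma part5 (x : HSp a) : iform a (eP a) x = 0 := by
  rw [iform_eq]
  have h0 : eP a (Sum.inl 0) = 0 := by simp [eP]
  have h1 : ∀ (k : Fin 3) (p : Fin (a k - 1)), eP a (Sum.inr ⟨k, p⟩) = 0 := by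
    intro k p; simp [eP]
  rw [h0]
  simp only [h1]
  simp

end MainParts
section MainParts2

variable (a : Fin 3 → ℕ)

lemma part3 (k : Fin 3) (p q : Fin (a k - 1)) :
    iform a (wT a k p) (wT a k q) =
      if p = q then 2
      else if (p : ℕ) + 1 = (q : ℕ) ∨ (q : ℕ) + 1 = (p : ℕ) then -1
      else 0 := by
  have hk : 0 < a k := by have := p.isLt; omega
  have ha2 : 2 ≤ a k := by have := p.isLt; omega
  have hane : (a k : ℂ) ≠ 0 := Nat.cast_ne_zero.mpr hk.ne'
  have hom := om_ne_zero a k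
  rw [iform_eq, wT_one]
  rw [Fintype.sum_eq_single k (fun j hj => Finset.sum_eq_zero (fun r _ => by
    rw [wT_coeff_other a k j p r hj]; ring))]
  have hterm : ∀ r : Fin (a k - 1),
      (1 / (a k : ℂ)) * (dd a k r * wT a k p (Sum.inr ⟨k, r⟩)) *
        (dd a k r.rev * wT a k q (Sum.inr ⟨k, r.rev⟩)) =
      (1 / (a k : ℂ)) *
        (2 * om a k ^ (((p : ℤ) - (q : ℤ)) * ((r : ℤ) + 1)) -
          om a k ^ (((p : ℤ) - (q : ℤ) + 1) * ((r : ℤ) + 1)) -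
          om a k ^ (((p : ℤ) - (q : ℤ) - 1) * ((r : ℤ) + 1))) := by
    intro r
    rw [wT_coeff_same a k p r, wT_coeff_same a k q r.rev,
      mul_comm (dd a k r), div_mul_cancel₀ _ (dd_ne_zero a k r),
      mul_comm (dd a k r.rev), div_mul_cancel₀ _ (dd_ne_zero a k r.rev),
      om_rev a k ((q : ℤ) + 1) r, om_rev a k (q : ℤ) r]
    have m1 : om a k ^ (((p : ℤ) + 1) * ((r : ℤ) + 1)) *
        om a k ^ ((-((q : ℤ) + 1)) * ((r : ℤ) + 1)) =
        om a k ^ (((p : ℤ) - (q : ℤ)) * ((r : ℤ) + 1)) := by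
      rw [← zpow_add₀ hom]; congr 1; ring
    have m2 : om a k ^ (((p : ℤ) + 1) * ((r : ℤ) + 1)) *
        om a k ^ ((-(q : ℤ)) * ((r : ℤ) + 1)) =
        om a k ^ (((p : ℤ) - (q : ℤ) + 1) * ((r : ℤ) + 1)) := by
      rw [← zpow_add₀ hom]; congr 1; ring
    have m3 : om a k ^ ((p : ℤ) * ((r : ℤ) + 1)) *
        om a k ^ ((-((q : ℤ) + 1)) * ((r : ℤ) + 1)) =
        om a k ^ (((p : ℤ) - (q : ℤ) - 1) * ((r : ℤ) + 1)) := by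
      rw [← zpow_add₀ hom]; congr 1; ring
    have m4 : om a k ^ ((p : ℤ) * ((r : ℤ) + 1)) *
        om a k ^ ((-(q : ℤ)) * ((r : ℤ) + 1)) =
        om a k ^ (((p : ℤ) - (q : ℤ)) * ((r : ℤ) + 1)) := by
      rw [← zpow_add₀ hom]; congr 1; ring
    linear_combination (1 / (a k : ℂ)) * (m1 - m2 - m3 + m4)
  rw [Finset.sum_congr rfl (fun r _ => hterm r), ← Finset.mul_sum]
  have hsplit : (∑ r : Fin (a k - 1),
      (2 * om a k ^ (((p : ℤ) - (q : ℤ)) * ((r : ℤ) + 1)) -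
        om a k ^ (((p : ℤ) - (q : ℤ) + 1) * ((r : ℤ) + 1)) -
        om a k ^ (((p : ℤ) - (q : ℤ) - 1) * ((r : ℤ) + 1)))) =
      2 * ((if (a k : ℤ) ∣ ((p : ℤ) - (q : ℤ)) then (a k : ℂ) else 0) - 1) -
        ((if (a k : ℤ) ∣ ((p : ℤ) - (q : ℤ) + 1) then (a k : ℂ) else 0) - 1) -
        ((if (a k : ℤ) ∣ ((p : ℤ) - (q : ℤ) - 1) then (a k : ℂ) else 0) - 1) := by
    rw [Finset.sum_sub_distrib, Finset.sum_sub_distrib, ← Finset.mul_sum,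
      sum_om a k hk, sum_om a k hk, sum_om a k hk]
  rw [hsplit]
  have i1 : ((a k : ℤ) ∣ ((p : ℤ) - (q : ℤ))) ↔ p = q := dvd_iff_eq a k p q
  have i2 : ((a k : ℤ) ∣ ((p : ℤ) - (q : ℤ) + 1)) ↔ (p : ℕ) + 1 = (q : ℕ) :=
    dvd_iff_succ a k p q
  have i3 : ((a k : ℤ) ∣ ((p : ℤ) - (q : ℤ) - 1)) ↔ (q : ℕ) + 1 = (p : ℕ) := by
    rw [show (p : ℤ) - (q : ℤ) - 1 = -((q : ℤ) - (p : ℤ) + 1) from by ring, Int.dvd_neg]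
    exact dvd_iff_succ a k q p
  by_cases h1 : p = q
  · have h2 : ¬ ((p : ℕ) + 1 = (q : ℕ)) := by subst h1; omega
    have h3 : ¬ ((q : ℕ) + 1 = (p : ℕ)) := by subst h1; omega
    rw [if_pos (i1.mpr h1), if_neg (fun hh => h2 (i2.mp hh)),
      if_neg (fun hh => h3 (i3.mp hh)), if_pos h1]
    field_simp
    ring
  · rw [if_neg (fun hh => h1 (i1.mp hh)), if_neg h1]
    by_cases h2 : (p : ℕ) + 1 = (q : ℕ)
    · have h3 : ¬ ((q : ℕ) + 1 = (p : ℕ)) := by omega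
      rw [if_pos (i2.mpr h2), if_neg (fun hh => h3 (i3.mp hh)), if_pos (Or.inl h2)]
      field_simp
      ring
    · by_cases h3 : (q : ℕ) + 1 = (p : ℕ)
      · rw [if_neg (fun hh => h2 (i2.mp hh)), if_pos (i3.mpr h3), if_pos (Or.inr h3)]
        field_simp
        ring
      · rw [if_neg (fun hh => h2 (i2.mp hh)), if_neg (fun hh => h3 (i3.mp hh)),
          if_neg (by push_neg; exact ⟨h2, h3⟩)]
        ring

lemma ePhi_inl (k : Fin 3) (s : Fin (a k - 1)) (i : Fin 2) :
    ePhi a k s (Sum.inl i) = 0 := by simp [ePhi]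

lemma ePhi_same (k : Fin 3) (s r : Fin (a k - 1)) :
    ePhi a k s (Sum.inr ⟨k, r⟩) = if r = s then 1 else 0 := by
  unfold ePhi
  congr 1
  simp [Sigma.mk.inj_iff]

lemma ePhi_other (k j : Fin 3) (s : Fin (a k - 1)) (r : Fin (a j - 1)) (h : j ≠ k) :
    ePhi a k s (Sum.inr ⟨j, r⟩) = 0 := by
  unfold ePhi
  rw [if_neg]
  simp [Sigma.mk.inj_iff, h]

lemma part6 (hchi : chiQ a ≠ 0) (x : HSp a) (hx : ∀ y : HSp a, iform a x y = 0) :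
    ∃ c : ℂ, x = c • eP a := by
  have hchiC : (chiQ a : ℂ) ≠ 0 := by exact_mod_cast hchi
  have hx0 : x (Sum.inl 0) = 0 := by
    have h := hx (eOne a)
    rw [iform_eq] at h
    have h1 : eOne a (Sum.inl 0) = 1 := by simp [eOne]
    have h2 : ∀ (k : Fin 3) (r : Fin (a k - 1)), eOne a (Sum.inr ⟨k, r⟩) = 0 := by
      intro k r; simp [eOne]
    rw [h1] at h
    simp only [h2, mul_zero, Finset.sum_const_zero, mul_one, add_zero] at h
    rcases mul_eq_zero.mp h with h | h
    · exact absurd h hchiC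
    · exact h
  have hxt : ∀ (k : Fin 3) (r : Fin (a k - 1)), x (Sum.inr ⟨k, r⟩) = 0 := by
    intro k r
    have hk : 0 < a k := by have := r.isLt; omega
    have hane : (a k : ℂ) ≠ 0 := Nat.cast_ne_zero.mpr hk.ne'
    have h := hx (ePhi a k r.rev)
    rw [iform_eq, ePhi_inl] at h
    rw [Fintype.sum_eq_single k (fun j hj => Finset.sum_eq_zero (fun s _ => by
      rw [ePhi_other a k j r.rev s.rev hj]; ring)) ] at h
    rw [Fintype.sum_eq_single r (fun s hs => by
      rw [ePhi_same a k r.rev s.rev, if_neg (fun hh => hs (Fin.rev_injective hh))]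
      ring)] at h
    rw [ePhi_same a k r.rev r.rev, if_pos rfl, mul_zero, zero_add, mul_one] at h
    have := mul_eq_zero.mp h
    rcases this with h' | h'
    · rcases mul_eq_zero.mp h' with h'' | h''
      · exact absurd h'' (by simp [hane])
      · rcases mul_eq_zero.mp h'' with h3 | h3
        · exact absurd h3 (dd_ne_zero a k r)
        · exact h3
    · exact absurd h' (dd_ne_zero a k r.rev)
  refine ⟨x (Sum.inl 1), funext fun i => ?_⟩
  rcases i with i | ⟨k, r⟩
  · fin_cases i
    · simpa [eP] using hx0
    · simp [eP]
  · simpa [eP] using hxt k r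

end MainParts2


/-- The Gram matrix of the family `(w_b; w_{k,p})` with respect to the intersection form
`(x|y) := (r(x), (1-ρ)r(y))` is the Cartan matrix of the T-shaped tree `T(a₁,a₂,a₃)`;
moreover `(P|·) = 0` and, if `χ ≠ 0`, the kernel of the intersection form is `ℂ·P`. -/
theorem stmt8 (a : Fin 3 → ℕ) (ha : ∀ k, 0 < a k) :
    iform a (wB a) (wB a) = 2 ∧
    (∀ (k : Fin 3) (p : Fin (a k - 1)),
      iform a (wB a) (wT a k p) = if p.val = 0 then -1 else 0) ∧
    (∀ (k : Fin 3) (p q : Fin (a k - 1)),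
      iform a (wT a k p) (wT a k q) =
        if p = q then 2
        else if p.val + 1 = q.val ∨ q.val + 1 = p.val then -1
        else 0) ∧
    (∀ k k' : Fin 3, k ≠ k' →
      ∀ (p : Fin (a k - 1)) (q : Fin (a k' - 1)),
        iform a (wT a k p) (wT a k' q) = 0) ∧
    (∀ x : HSp a, iform a (eP a) x = 0) ∧
    (chiQ a ≠ 0 →
      ∀ x : HSp a, (∀ y : HSp a, iform a x y = 0) → ∃ c : ℂ, x = c • eP a) := by
  exact ⟨part1 a ha, fun k p => part2 a k p, fun k p q => part3 a k p q,
    fun k k' h p q => part4 a k k' h p q, fun x => part5 a x,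
    fun h x hx => part6 a h x hx⟩
end
end

section
/- Let R be the commutative ring ℤ[L₁^{±1}, L₂^{±1}, L₃^{±1}]/I, where I is the ideal generated by L₁^{a₁} − L₂^{a₂}, L₂^{a₂} − L₃^{a₃}, and (1−L_k)(1−L_{k'}) for 1 ≤ k < k' ≤ 3. Put L := L₁^{a₁} and T := L₁L₂L₃·L⁻¹ in R. Then, in R, for every k ∈ {1,2,3} and every m ∈ ℤ: (i) (L_k^{−m} − L_k^{−m+1})·T = L_k^{−m+1} − L_k^{−m+2}; (ii) T·( 1 + Σ_{k=1}^{3}(L_k^{−1} − 1) + (L − 1) ) = 1, i.e. T⁻¹ = 1 + Σ_k(L_k^{−1}−1) + (L−1); (iii) (L_k^{−1} − 1)·T = (1 − L_k^{−(a_k−1)}) + (1 − L). -/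
open scoped BigOperators

private lemma fixz {R : Type*} [CommRing R] (e : R) (v : Rˣ)
    (h : e * (v : R) = e) (m : ℤ) : e * ((v ^ m : Rˣ) : R) = e := by
  have hinv : e * ((v⁻¹ : Rˣ) : R) = e := by
    calc e * ((v⁻¹ : Rˣ) : R) = (e * (v : R)) * ((v⁻¹ : Rˣ) : R) := by rw [h]
      _ = e * ((v : R) * ((v⁻¹ : Rˣ) : R)) := by ring
      _ = e * 1 := by rw [Units.mul_inv]
      _ = e := mul_one e
  induction m using Int.induction_on with
  | zero => simp
  | succ n ih => rw [zpow_add_one, Units.val_mul, ← mul_assoc, ih, h]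
  | pred n ih => rw [zpow_sub_one, Units.val_mul, ← mul_assoc, ih, hinv]

/-- In the K-ring `R = ℤ[L₁^{±1},L₂^{±1},L₃^{±1}]/(L₁^{a₁}-L₂^{a₂}, L₂^{a₂}-L₃^{a₃},
(1-L_k)(1-L_{k'}))` of `ℙ¹_{a₁,a₂,a₃}` (formalized as: any commutative ring with units
`L₁,L₂,L₃` satisfying these relations), with `L := L₁^{a₁}` and `T := L₁L₂L₃·L⁻¹`:
(i) `(L_k^{-m} - L_k^{-m+1})·T = L_k^{-m+1} - L_k^{-m+2}`;
(ii) `T·(1 + Σ_k (L_k^{-1} - 1) + (L - 1)) = 1`;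
(iii) `(L_k^{-1} - 1)·T = (1 - L_k^{-(a_k-1)}) + (1 - L)`. -/
theorem stmt13 (a : Fin 3 → ℕ) (ha : ∀ k, 0 < a k)
    (R : Type*) [CommRing R] (L : Fin 3 → Rˣ)
    (hL01 : L 0 ^ (a 0) = L 1 ^ (a 1))
    (hL12 : L 1 ^ (a 1) = L 2 ^ (a 2))
    (hrel : ∀ k k' : Fin 3, k < k' → (1 - (L k : R)) * (1 - (L k' : R)) = 0) :
    (∀ (k : Fin 3) (m : ℤ),
      (((L k ^ (-m) : Rˣ) : R) - ((L k ^ (-m + 1) : Rˣ) : R)) *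
          ((L 0 * L 1 * L 2 * (L 0 ^ (a 0))⁻¹ : Rˣ) : R) =
        ((L k ^ (-m + 1) : Rˣ) : R) - ((L k ^ (-m + 2) : Rˣ) : R)) ∧
    ((L 0 * L 1 * L 2 * (L 0 ^ (a 0))⁻¹ : Rˣ) : R) *
        (1 + (∑ k : Fin 3, ((((L k)⁻¹ : Rˣ) : R) - 1)) +
          (((L 0 ^ (a 0) : Rˣ) : R) - 1)) = 1 ∧
    (∀ k : Fin 3,
      ((((L k)⁻¹ : Rˣ) : R) - 1) *
          ((L 0 * L 1 * L 2 * (L 0 ^ (a 0))⁻¹ : Rˣ) : R) =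
        (1 - ((L k ^ (-((a k : ℤ) - 1)) : Rˣ) : R)) +
          (1 - ((L 0 ^ (a 0) : Rˣ) : R))) := by
  -- symmetrized relations
  have hrel' : ∀ k k' : Fin 3, k ≠ k' → (1 - (L k : R)) * (1 - (L k' : R)) = 0 := by
    intro k k' h
    rcases lt_or_gt_of_ne h with h' | h'
    · exact hrel k k' h'
    · rw [mul_comm]; exact hrel k' k h'
  have hfix : ∀ k k' : Fin 3, k ≠ k' → (1 - (L k : R)) * (L k' : R) = 1 - (L k : R) := by
    intro k k' h
    linear_combination -(hrel' k k' h)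
  have hfixz : ∀ (k k' : Fin 3) (m : ℤ), k ≠ k' →
      (1 - (L k : R)) * ((L k' ^ m : Rˣ) : R) = 1 - (L k : R) := fun k k' m h =>
    fixz _ _ (hfix k k' h) m
  have hLpow : ∀ k : Fin 3, L k ^ (a k) = L 0 ^ (a 0) := by
    intro k; fin_cases k
    · rfl
    · exact hL01.symm
    · exact (hL01.trans hL12).symm
  -- (1 - L k) is fixed by multiplication with L := L0^{a0}
  have hbase : ∀ k : Fin 3, (1 - (L k : R)) * ((L 0 ^ a 0 : Rˣ) : R) = 1 - (L k : R) := by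
    intro k
    fin_cases k
    · rw [hL01]
      have := hfixz 0 1 (a 1 : ℤ) (by decide)
      rwa [zpow_natCast] at this
    · have := hfixz 1 0 (a 0 : ℤ) (by decide)
      rwa [zpow_natCast] at this
    · have := hfixz 2 0 (a 0 : ℤ) (by decide)
      rwa [zpow_natCast] at this
  -- and by its inverse
  have hD : ∀ k : Fin 3, (1 - (L k : R)) * (((L 0 ^ a 0)⁻¹ : Rˣ) : R) = 1 - (L k : R) := by
    intro k
    have := fixz _ _ (hbase k) (-1)
    rwa [zpow_neg_one] at this
  set ℓ : R := ((L 0 ^ a 0 : Rˣ) : R) with hℓdef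
  set ℓ' : R := (((L 0 ^ a 0)⁻¹ : Rˣ) : R) with hℓ'def
  have hF : ℓ * ℓ' = 1 := Units.mul_inv _
  have hE : ∀ k : Fin 3, (L k : R) * (((L k)⁻¹ : Rˣ) : R) = 1 := fun k => Units.mul_inv _
  -- (1 - L)(1 - L⁻¹) = 0
  have hx0 : (1 - ℓ') * (L 0 : R) = (1 - ℓ') := by
    linear_combination hD 0
  have h2ℓ : (1 - ℓ) * (1 - ℓ') = 0 := by
    have h := fixz _ _ hx0 (a 0 : ℤ)
    rw [zpow_natCast, ← hℓdef] at h
    linear_combination -h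
  -- key identity: (1 - L_k) · T = (1 - L_k) · L_k
  have hK0 : (1 - (L 0 : R)) * ((L 0 : R) * (L 1 : R) * (L 2 : R) * ℓ') =
      (1 - (L 0 : R)) * (L 0 : R) := by
    linear_combination ((L 0 : R) * (L 2 : R) * ℓ') * (hfix 0 1 (by decide)) +
      ((L 0 : R) * ℓ') * (hfix 0 2 (by decide)) + (L 0 : R) * (hD 0)
  have hK1 : (1 - (L 1 : R)) * ((L 0 : R) * (L 1 : R) * (L 2 : R) * ℓ') =
      (1 - (L 1 : R)) * (L 1 : R) := by
    linear_combination ((L 1 : R) * (L 2 : R) * ℓ') * (hfix 1 0 (by decide)) +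
      ((L 1 : R) * ℓ') * (hfix 1 2 (by decide)) + (L 1 : R) * (hD 1)
  have hK2 : (1 - (L 2 : R)) * ((L 0 : R) * (L 1 : R) * (L 2 : R) * ℓ') =
      (1 - (L 2 : R)) * (L 2 : R) := by
    linear_combination ((L 1 : R) * (L 2 : R) * ℓ') * (hfix 2 0 (by decide)) +
      ((L 2 : R) * ℓ') * (hfix 2 1 (by decide)) + (L 2 : R) * (hD 2)
  have hK : ∀ k : Fin 3, (1 - (L k : R)) * ((L 0 : R) * (L 1 : R) * (L 2 : R) * ℓ') =
      (1 - (L k : R)) * (L k : R) := by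
    intro k
    fin_cases k
    exacts [hK0, hK1, hK2]
  refine ⟨?_, ?_, ?_⟩
  · -- (i)
    intro k m
    have e1 : (L k ^ (-m + 1) : Rˣ) = L k ^ (-m) * L k := by
      rw [zpow_add_one]
    have e2 : (L k ^ (-m + 2) : Rˣ) = L k ^ (-m) * L k * L k := by
      rw [show (-m + 2 : ℤ) = (-m + 1) + 1 by ring, zpow_add_one, e1]
    rw [e1, e2]
    simp only [Units.val_mul]
    linear_combination ((L k ^ (-m) : Rˣ) : R) * hK k
  · -- (ii)
    rw [Fin.sum_univ_three]
    simp only [Units.val_mul]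
    linear_combination (L 0 : R) * (L 1 : R) * (L 2 : R) * hF +
      ((L 1 : R) * (L 2 : R) * ℓ') * hE 0 + ((L 0 : R) * (L 2 : R) * ℓ') * hE 1 +
      ((L 0 : R) * (L 1 : R) * ℓ') * hE 2 + hD 0 + hD 1 + hD 2 +
      (ℓ' + (L 2 : R) - 3 * (L 2 : R) * ℓ') * hrel' 0 1 (by decide) +
      (1 - 2 * ℓ') * hrel' 0 2 (by decide) + (1 - 2 * ℓ') * hrel' 1 2 (by decide)
  · -- (iii)
    intro k
    have hQ : (L k ^ (-((a k : ℤ) - 1)) : Rˣ) = L k * (L 0 ^ (a 0))⁻¹ := by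
      rw [show (-((a k : ℤ) - 1)) = 1 + -(a k : ℤ) by ring, zpow_add, zpow_one,
        zpow_neg, zpow_natCast, hLpow k]
    rw [hQ]
    simp only [Units.val_mul]
    linear_combination (((L k)⁻¹ : Rˣ) : R) * hK k +
      ((L 0 : R) * (L 1 : R) * (L 2 : R) * ℓ' + 1 - (L k : R)) * hE k - hD k - h2ℓ + hF
end

section
/- Set w_b := v_{1,0} and w_{k,p} := v_{k,−p} − v_{k,−p+1} for 1 ≤ k ≤ 3, 1 ≤ p ≤ a_k−1, and δ := 2πi·P. Then the set B = {δ, w_b} ∪ {w_{k,p} : 1 ≤ k ≤ 3, 1 ≤ p ≤ a_k−1}, which has a₁+a₂+a₃−1 elements, is a ℂ-basis of H, and the ℤ-submodule of H generated by {v_{k,m} : 1 ≤ k ≤ 3, m ∈ ℤ} coincides with the ℤ-span of B. (B is a ℤ-basis of the image of the Milnor lattice under the calibrated period map.) -/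
open scoped BigOperators

noncomputable section

/-- The imaginary root `δ := 2πi·P`. -/
def deltaH (a : Fin 3 → ℕ) : HSp a := (2 * (Real.pi : ℂ) * Complex.I) • eP a

/-- The family `B = {δ, w_b} ∪ {w_{k,p}}`, indexed by `Idx a`. -/
def famB (a : Fin 3 → ℕ) : Idx a → HSp a := fun i =>
  match i with
  | Sum.inl j => if j = 0 then deltaH a else wB a
  | Sum.inr ⟨k, p⟩ => wT a k p

/-! ### Auxiliary lemmas for the proof -/

open Complex in
lemma aux_twoPiI_ne_zero : (2 * (Real.pi : ℂ) * Complex.I) ≠ 0 := by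
  refine mul_ne_zero (mul_ne_zero two_ne_zero ?_) Complex.I_ne_zero
  exact_mod_cast Complex.ofReal_ne_zero.mpr Real.pi_ne_zero

lemma aux_p1_lt (a : Fin 3 → ℕ) {k : Fin 3} (p : Fin (a k - 1)) : p.val + 1 < a k := by
  have := p.isLt; omega

lemma aux_acast_ne (a : Fin 3 → ℕ) {k : Fin 3} (p : Fin (a k - 1)) : (a k : ℂ) ≠ 0 := by
  have := aux_p1_lt a p
  exact Nat.cast_ne_zero.mpr (by omega)

lemma aux_dd_ne_zero (a : Fin 3 → ℕ) (k : Fin 3) (p : Fin (a k - 1)) : dd a k p ≠ 0 := by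
  have hlt := aux_p1_lt a p
  have hA : (a k : ℂ) ≠ 0 := aux_acast_ne a p
  unfold dd
  rw [sub_ne_zero]
  intro h
  rw [eq_comm, div_eq_one_iff_eq hA] at h
  have : (p.val + 1 : ℕ) = a k := by exact_mod_cast h
  omega

/-- `z_{k,q} = exp(2πi(q+1)/a_k)`. -/
def zf (a : Fin 3 → ℕ) (k : Fin 3) (q : Fin (a k - 1)) : ℂ :=
  Complex.exp (2 * (Real.pi : ℂ) * Complex.I * (((q.val : ℂ) + 1) / (a k : ℂ)))

lemma aux_exp_neg_nat (a : Fin 3 → ℕ) {k : Fin 3} (q : Fin (a k - 1)) (n : ℕ) :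
    Complex.exp (2 * (Real.pi : ℂ) * Complex.I * (-(n : ℂ)) * dd a k q) = zf a k q ^ n := by
  have h : 2 * (Real.pi : ℂ) * Complex.I * (-(n : ℂ)) * dd a k q
      = (n : ℂ) * (2 * (Real.pi : ℂ) * Complex.I * (((q.val : ℂ) + 1) / (a k : ℂ)))
        + ((-(n : ℕ) : ℤ) : ℂ) * (2 * (Real.pi : ℂ) * Complex.I) := by
    unfold dd; push_cast; ring
  rw [h, Complex.exp_add, Complex.exp_int_mul_two_pi_mul_I, mul_one, Complex.exp_nat_mul]
  rfl

lemma aux_exp_shift (a : Fin 3 → ℕ) {k : Fin 3} (p : Fin (a k - 1)) (m t : ℤ) :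
    Complex.exp (2 * (Real.pi : ℂ) * Complex.I * ((m + t * (a k : ℤ) : ℤ) : ℂ) * dd a k p)
      = Complex.exp (2 * (Real.pi : ℂ) * Complex.I * (m : ℂ) * dd a k p) := by
  have hA : (a k : ℂ) ≠ 0 := aux_acast_ne a p
  have had : (a k : ℂ) * dd a k p = (((a k : ℤ) - (p.val + 1) : ℤ) : ℂ) := by
    unfold dd; push_cast; field_simp
  have h : 2 * (Real.pi : ℂ) * Complex.I * ((m + t * (a k : ℤ) : ℤ) : ℂ) * dd a k p
      = 2 * (Real.pi : ℂ) * Complex.I * (m : ℂ) * dd a k p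
        + ((t * ((a k : ℤ) - (p.val + 1)) : ℤ) : ℂ) * (2 * (Real.pi : ℂ) * Complex.I) := by
    have h2 : ((t * ((a k : ℤ) - (p.val + 1)) : ℤ) : ℂ) = (t : ℂ) * ((a k : ℂ) * dd a k p) := by
      rw [had]; push_cast; ring
    rw [h2]; push_cast; ring
  rw [h, Complex.exp_add, Complex.exp_int_mul_two_pi_mul_I, mul_one]

lemma aux_deltaH_inl0' (a : Fin 3 → ℕ) : deltaH a (Sum.inl 0) = 0 := by simp [deltaH, eP]

lemma aux_deltaH_inl1' (a : Fin 3 → ℕ) :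
    deltaH a (Sum.inl 1) = 2 * (Real.pi : ℂ) * Complex.I := by simp [deltaH, eP]

lemma aux_deltaH_inr' (a : Fin 3 → ℕ) (x : TwIdx a) : deltaH a (Sum.inr x) = 0 := by
  simp [deltaH, eP]

lemma aux_vv_shift (a : Fin 3 → ℕ) (ha : ∀ k, 0 < a k) (k : Fin 3) (m t : ℤ) :
    vv a k (m + t * (a k : ℤ)) = vv a k m + t • deltaH a := by
  have hA : (a k : ℂ) ≠ 0 := Nat.cast_ne_zero.mpr (ha k).ne'
  funext i
  rw [Pi.add_apply, Pi.smul_apply]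
  rcases i with j | ⟨j, p⟩
  · fin_cases j
    · show vv a k (m + t * (a k : ℤ)) (Sum.inl 0)
        = vv a k m (Sum.inl 0) + t • deltaH a (Sum.inl 0)
      rw [aux_deltaH_inl0', smul_zero, add_zero]
      simp [vv]
    · show vv a k (m + t * (a k : ℤ)) (Sum.inl 1)
        = vv a k m (Sum.inl 1) + t • deltaH a (Sum.inl 1)
      rw [aux_deltaH_inl1', zsmul_eq_mul]
      simp only [vv, Fin.mk_one, if_neg (one_ne_zero : (1 : Fin 2) ≠ 0)]
      push_cast
      field_simp
  · rw [aux_deltaH_inr', smul_zero, add_zero]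
    by_cases hj : j = k
    · subst hj
      simp only [vv, if_pos rfl]
      rw [aux_exp_shift]
    · simp [vv, hj]

lemma aux_vv_zero (a : Fin 3 → ℕ) (k : Fin 3) : vv a k 0 = wB a := by
  funext i
  unfold wB
  rcases i with j | ⟨j, p⟩
  · fin_cases j <;> simp [vv]
  · unfold vv
    by_cases h1 : j = k <;> by_cases h2 : j = 0 <;> simp [h1, h2]

lemma aux_famB_inl0 (a : Fin 3 → ℕ) : famB a (Sum.inl 0) = deltaH a := rfl

lemma aux_famB_inl1 (a : Fin 3 → ℕ) : famB a (Sum.inl 1) = wB a := by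
  show (if (1 : Fin 2) = 0 then deltaH a else wB a) = wB a
  simp

lemma aux_famB_inr (a : Fin 3 → ℕ) (k : Fin 3) (p : Fin (a k - 1)) :
    famB a (Sum.inr ⟨k, p⟩) = wT a k p := rfl

lemma aux_wB_inl0 (a : Fin 3 → ℕ) : wB a (Sum.inl 0) = 1 := by simp [wB, vv]

lemma aux_wB_inl1 (a : Fin 3 → ℕ) : wB a (Sum.inl 1) = 0 := by simp [wB, vv]

lemma aux_wB_inr (a : Fin 3 → ℕ) (k : Fin 3) (q : Fin (a k - 1)) :
    wB a (Sum.inr ⟨k, q⟩) = 1 / dd a k q := by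
  unfold wB vv
  by_cases h : k = (0 : Fin 3) <;> simp [h]

lemma aux_wT_inl0 (a : Fin 3 → ℕ) (k : Fin 3) (p : Fin (a k - 1)) :
    wT a k p (Sum.inl 0) = 0 := by
  simp [wT, vv]

lemma aux_wT_inl1 (a : Fin 3 → ℕ) (k : Fin 3) (p : Fin (a k - 1)) :
    wT a k p (Sum.inl 1) = -(2 * (Real.pi : ℂ) * Complex.I) / (a k : ℂ) := by
  simp only [wT, Pi.sub_apply, vv, if_neg (one_ne_zero)]
  push_cast
  ring

lemma aux_wT_inr_ne (a : Fin 3 → ℕ) {j k : Fin 3} (h : k ≠ j) (p : Fin (a j - 1))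
    (q : Fin (a k - 1)) : wT a j p (Sum.inr ⟨k, q⟩) = 0 := by
  simp [wT, vv, h]

lemma aux_wT_inr_eq (a : Fin 3 → ℕ) (k : Fin 3) (p q : Fin (a k - 1)) :
    wT a k p (Sum.inr ⟨k, q⟩)
      = (zf a k q ^ (p.val + 1) - zf a k q ^ p.val) / dd a k q := by
  simp only [wT, Pi.sub_apply, vv, if_pos rfl, if_true, eq_self_iff_true]
  have e1 : ((-((p.val : ℤ) + 1) : ℤ) : ℂ) = -(((p.val + 1 : ℕ) : ℂ)) := by push_cast; ring
  have e2 : ((-((p.val : ℤ) + 1) + 1 : ℤ) : ℂ) = -(((p.val : ℕ) : ℂ)) := by push_cast; ring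
  rw [e1, e2, aux_exp_neg_nat, aux_exp_neg_nat]
  ring

lemma aux_zf_inj (a : Fin 3 → ℕ) (k : Fin 3) : Function.Injective (zf a k) := by
  intro q q' h
  unfold zf at h
  rw [Complex.exp_eq_exp_iff_exists_int] at h
  obtain ⟨n, hn⟩ := h
  have hA : (a k : ℂ) ≠ 0 := aux_acast_ne a q
  have h1 : ((q.val : ℂ) + 1) / (a k : ℂ) = ((q'.val : ℂ) + 1) / (a k : ℂ) + (n : ℂ) := by
    apply mul_left_cancel₀ aux_twoPiI_ne_zero
    rw [hn]; ring
  field_simp at h1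
  have h5 : (q.val + 1 : ℤ) = q'.val + 1 + n * (a k : ℤ) := by
    have h4 : ((q.val + 1 : ℤ) : ℂ) = ((q'.val + 1 + n * (a k : ℤ) : ℤ) : ℂ) := by
      push_cast
      linear_combination h1
    exact_mod_cast h4
  have hq : (q.val : ℤ) + 1 < (a k : ℤ) := by exact_mod_cast aux_p1_lt a q
  have hq' : (q'.val : ℤ) + 1 < (a k : ℤ) := by exact_mod_cast aux_p1_lt a q'
  have hq0 : (0 : ℤ) ≤ (q.val : ℤ) := Int.ofNat_nonneg _
  have hq0' : (0 : ℤ) ≤ (q'.val : ℤ) := Int.ofNat_nonneg _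
  have hn0 : n = 0 := by
    rcases lt_trichotomy n 0 with hlt | heq | hgt
    · exfalso
      have : n * (a k : ℤ) ≤ -1 * (a k : ℤ) :=
        mul_le_mul_of_nonneg_right (by omega) (by linarith)
      linarith
    · exact heq
    · exfalso
      have : 1 * (a k : ℤ) ≤ n * (a k : ℤ) :=
        mul_le_mul_of_nonneg_right (by omega) (by linarith)
      linarith
  rw [hn0] at h5
  have : (q.val : ℤ) = q'.val := by simpa using h5
  exact Fin.ext (by exact_mod_cast this)

lemma aux_zf_ne_one (a : Fin 3 → ℕ) (k : Fin 3) (q : Fin (a k - 1)) : zf a k q ≠ 1 := by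
  unfold zf
  intro hone
  rw [Complex.exp_eq_one_iff] at hone
  obtain ⟨n, hn⟩ := hone
  have hA : (a k : ℂ) ≠ 0 := aux_acast_ne a q
  have h1 : ((q.val : ℂ) + 1) / (a k : ℂ) = (n : ℂ) := by
    apply mul_left_cancel₀ aux_twoPiI_ne_zero
    rw [hn]; ring
  rw [div_eq_iff hA] at h1
  have h5 : (q.val + 1 : ℤ) = n * (a k : ℤ) := by
    have h4 : ((q.val + 1 : ℤ) : ℂ) = ((n * (a k : ℤ) : ℤ) : ℂ) := by
      push_cast
      linear_combination h1
    exact_mod_cast h4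
  have hq : (q.val : ℤ) + 1 < (a k : ℤ) := by exact_mod_cast aux_p1_lt a q
  have hq0 : (0 : ℤ) ≤ (q.val : ℤ) := Int.ofNat_nonneg _
  rcases lt_trichotomy n 0 with hlt | heq | hgt
  · have : n * (a k : ℤ) ≤ -1 * (a k : ℤ) :=
      mul_le_mul_of_nonneg_right (by omega) (by linarith)
    linarith
  · rw [heq] at h5; simp at h5; omega
  · have : 1 * (a k : ℤ) ≤ n * (a k : ℤ) :=
      mul_le_mul_of_nonneg_right (by omega) (by linarith)
    linarith

lemma aux_indep (a : Fin 3 → ℕ) (ha : ∀ k, 0 < a k) : LinearIndependent ℂ (famB a) := by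
  rw [Fintype.linearIndependent_iff]
  intro g hg
  have heval : ∀ j : Idx a,
      g (Sum.inl 0) * deltaH a j + g (Sum.inl 1) * wB a j
        + ∑ k : Fin 3, ∑ p : Fin (a k - 1), g (Sum.inr ⟨k, p⟩) * wT a k p j = 0 := by
    intro j
    have h := congrFun hg j
    rw [Finset.sum_apply] at h
    simp only [Pi.smul_apply, smul_eq_mul] at h
    rw [Fintype.sum_sum_type, Fin.sum_univ_two, ← Finset.univ_sigma_univ,
      Finset.sum_sigma] at h
    simpa only [aux_famB_inl0, aux_famB_inl1, aux_famB_inr, Pi.zero_apply] using h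
  have h1 : g (Sum.inl 1) = 0 := by
    have h := heval (Sum.inl 0)
    simp only [aux_deltaH_inl0', aux_wB_inl0, aux_wT_inl0, mul_zero, mul_one,
      Finset.sum_const_zero, zero_add, add_zero] at h
    exact h
  have h2 : ∀ (k : Fin 3) (p : Fin (a k - 1)), g (Sum.inr ⟨k, p⟩) = 0 := by
    intro k
    have hrow : ∀ q : Fin (a k - 1),
        ∑ p : Fin (a k - 1), g (Sum.inr ⟨k, p⟩) * zf a k q ^ (p.val : ℕ) = 0 := by
      intro q
      have h := heval (Sum.inr ⟨k, q⟩)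
      rw [aux_deltaH_inr', mul_zero, zero_add, aux_wB_inr, h1, zero_mul, zero_add] at h
      rw [Finset.sum_eq_single k] at h
      rotate_left
      · intro j _ hjk
        apply Finset.sum_eq_zero
        intro p _
        rw [aux_wT_inr_ne a (Ne.symm hjk), mul_zero]
      · intro hk
        exact absurd (Finset.mem_univ k) hk
      simp only [aux_wT_inr_eq] at h
      have hd := aux_dd_ne_zero a k q
      have hz1 : zf a k q - 1 ≠ 0 := sub_ne_zero.mpr (aux_zf_ne_one a k q)
      have hfac : (∑ p : Fin (a k - 1), g (Sum.inr ⟨k, p⟩) * zf a k q ^ (p.val : ℕ))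
          * ((zf a k q - 1) / dd a k q) = 0 := by
        rw [Finset.sum_mul, ← h]
        apply Finset.sum_congr rfl
        intro p _
        rw [pow_succ]
        ring
      rcases mul_eq_zero.mp hfac with h' | h'
      · exact h'
      · exact absurd h' (div_ne_zero hz1 hd)
    have hv := Matrix.eq_zero_of_forall_index_sum_mul_pow_eq_zero (aux_zf_inj a k) hrow
    intro p
    exact congrFun hv p
  have h0 : g (Sum.inl 0) = 0 := by
    have h := heval (Sum.inl 1)
    simp only [aux_deltaH_inl1', aux_wB_inl1, mul_zero, add_zero, h1, h2, zero_mul,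
      Finset.sum_const_zero, add_zero] at h
    exact (mul_eq_zero.mp h).resolve_right aux_twoPiI_ne_zero
  intro i
  rcases i with j | ⟨k, p⟩
  · fin_cases j
    · exact h0
    · exact h1
  · exact h2 k p

lemma aux_vv_mem (a : Fin 3 → ℕ) (ha : ∀ k, 0 < a k) (k : Fin 3) (m : ℤ) :
    vv a k m ∈ Submodule.span ℤ (Set.range (famB a)) := by
  set S := Submodule.span ℤ (Set.range (famB a)) with hS
  have hδ : deltaH a ∈ S := Submodule.subset_span ⟨Sum.inl 0, rfl⟩
  have hwB : wB a ∈ S := Submodule.subset_span ⟨Sum.inl 1, aux_famB_inl1 a⟩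
  have hwT : ∀ (p : Fin (a k - 1)), wT a k p ∈ S := fun p =>
    Submodule.subset_span ⟨Sum.inr ⟨k, p⟩, rfl⟩
  have hstep : ∀ (p : Fin (a k - 1)),
      vv a k (-((p.val : ℤ) + 1)) = vv a k (-(p.val : ℤ)) + wT a k p := by
    intro p
    unfold wT
    have e : -((p.val : ℤ) + 1) + 1 = -(p.val : ℤ) := by ring
    rw [e]
    abel
  have hneg : ∀ n : ℕ, n < a k → vv a k (-(n : ℤ)) ∈ S := by
    intro n
    induction n with
    | zero =>
      intro _
      have hz : vv a k 0 ∈ S := by rw [aux_vv_zero]; exact hwB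
      simpa using hz
    | succ n ih =>
      intro hlt
      have hn : n < a k - 1 := by omega
      have e : (-((n + 1 : ℕ) : ℤ)) = -(((⟨n, hn⟩ : Fin (a k - 1)).val : ℤ) + 1) := by
        push_cast; ring
      rw [e, hstep ⟨n, hn⟩]
      exact Submodule.add_mem S (ih (by omega)) (hwT ⟨n, hn⟩)
  have hq := Int.emod_add_mul_ediv (-m) (a k : ℤ)
  have hr0 : 0 ≤ (-m) % (a k : ℤ) := Int.emod_nonneg _ (by exact_mod_cast (ha k).ne')
  have hrlt : (-m) % (a k : ℤ) < (a k : ℤ) := Int.emod_lt_of_pos _ (by exact_mod_cast ha k)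
  have hm : m = -((-m) % (a k : ℤ)) + (-((-m) / (a k : ℤ))) * (a k : ℤ) := by
    linear_combination hq
  rw [hm, aux_vv_shift a ha]
  refine Submodule.add_mem S ?_ (Submodule.smul_mem S _ hδ)
  have hmem : vv a k (-(((-m) % (a k : ℤ)).toNat : ℤ)) ∈ S := hneg _ (by omega)
  rwa [Int.toNat_of_nonneg hr0] at hmem

/-- `B = {δ, w_b} ∪ {w_{k,p}}` has `a₁+a₂+a₃-1` elements, is a `ℂ`-basis of `H`, and its
`ℤ`-span coincides with the `ℤ`-submodule generated by all calibrated periods `v_{k,m}`. -/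
theorem stmt18 (a : Fin 3 → ℕ) (ha : ∀ k, 0 < a k) :
    Fintype.card (Idx a) = a 0 + a 1 + a 2 - 1 ∧
    LinearIndependent ℂ (famB a) ∧
    Submodule.span ℂ (Set.range (famB a)) = ⊤ ∧
    Submodule.span ℤ (Set.range fun km : Fin 3 × ℤ => vv a km.1 km.2) =
      Submodule.span ℤ (Set.range (famB a)) := by

  refine ⟨?_, aux_indep a ha, ?_, ?_⟩
  · simp only [Fintype.card_sum, Fintype.card_sigma, Fintype.card_fin, Fin.sum_univ_three]
    have h0 := ha 0; have h1 := ha 1; have h2 := ha 2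
    omega
  · apply (aux_indep a ha).span_eq_top_of_card_eq_finrank
    rw [Module.finrank_pi]
  · apply le_antisymm
    · rw [Submodule.span_le]
      rintro x ⟨⟨k, m⟩, rfl⟩
      exact aux_vv_mem a ha k m
    · rw [Submodule.span_le]
      rintro x ⟨i, rfl⟩
      have hT : ∀ (k : Fin 3) (m : ℤ),
          vv a k m ∈ Submodule.span ℤ
            (Set.range fun km : Fin 3 × ℤ => vv a km.1 km.2) := fun k m =>
        Submodule.subset_span ⟨(k, m), rfl⟩
      rcases i with j | ⟨k, p⟩
      · fin_cases j
        · show deltaH a ∈ _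
          have h := aux_vv_shift a ha 0 0 1
          have he : deltaH a = vv a 0 (0 + 1 * (a 0 : ℤ)) - vv a 0 0 := by
            rw [h, one_smul]; abel
          rw [he]
          exact Submodule.sub_mem _ (hT 0 _) (hT 0 0)
        · show wB a ∈ _
          exact hT 0 0
      · show wT a k p ∈ _
        rw [wT]
        exact Submodule.sub_mem _ (hT k _) (hT k _)
end
end

section
/- Assume χ = 1/a₁ + 1/a₂ + 1/a₃ − 1 > 0. Then the Cartan matrix C of T(a₁,a₂,a₃) is positive definite: xᵀCx > 0 for every nonzero x ∈ ℝ^J. Consequently C is invertible, and for the vector v ∈ ℚ^J with v_b = 1 and v_{(k,p)} = 1 − p/a_k, the b-th column of C⁻¹ equals v/χ; in particular (C⁻¹)_{b,b} = 1/χ and (C⁻¹)_{b,(k,p)} = (1 − p/a_k)/χ. (Equivalently, the fundamental weights satisfy (ω_b|ω_b) = 1/χ and (ω_{k,p}|ω_b) = (1 − p/a_k)/χ.) -/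
open scoped BigOperators

section Aux

open Finset

variable {F : Type*} [Field F]

/-- Positions along arm `k`, with `0` being the branch vertex `b` and `q` (for
`1 ≤ q ≤ a k - 1`) being the vertex `some ⟨k, q-1⟩`; out of range gives `0`. -/
def Parm (a : Fin 3 → ℕ) (x : JIdx a → F) (k : Fin 3) : ℕ → F := fun q =>
  if q = 0 then x none
  else if h : q - 1 < a k - 1 then x (some ⟨k, ⟨q - 1, h⟩⟩) else 0

lemma sum_ite_fin {M : Type*} [AddCommMonoid M] (m t : ℕ) (f : Fin m → M) :
    (∑ q : Fin m, if q.val = t then f q else 0) = if h : t < m then f ⟨t, h⟩ else 0 := by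
  split_ifs with h
  · rw [Finset.sum_eq_single (⟨t, h⟩ : Fin m)]
    · simp
    · intro b _ hb; rw [if_neg]; simpa [Fin.ext_iff] using hb
    · simp
  · apply Finset.sum_eq_zero; intro q _; rw [if_neg]; omega

lemma parm_eq (a : Fin 3 → ℕ) (x : JIdx a → F) (k : Fin 3) (t : ℕ) :
    Parm a x k (t + 1) = if h : t < a k - 1 then x (some ⟨k, ⟨t, h⟩⟩) else 0 := by
  simp [Parm]

lemma parm_zero (a : Fin 3 → ℕ) (x : JIdx a → F) (k : Fin 3) :
    Parm a x k 0 = x none := by simp [Parm]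

lemma parm_top (a : Fin 3 → ℕ) (x : JIdx a → F) (k : Fin 3) :
    Parm a x k (a k - 1 + 1) = 0 := by
  rw [parm_eq]; simp

lemma parm_val (a : Fin 3 → ℕ) (x : JIdx a → F) (k : Fin 3) (p : Fin (a k - 1)) :
    x (some ⟨k, p⟩) = Parm a x k (p.val + 1) := by
  rw [parm_eq, dif_pos p.2]

lemma row_none (a : Fin 3 → ℕ) (x : JIdx a → F) :
    ∑ j : JIdx a, (Cartan a none j : F) * x j
      = 2 * x none - ∑ k : Fin 3, Parm a x k 1 := by
  rw [Fintype.sum_option, ← Finset.univ_sigma_univ, Finset.sum_sigma]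
  have h1 : ∀ k : Fin 3, ∑ q : Fin (a k - 1),
      ((Cartan a none (some ⟨k, q⟩) : ℚ) : F) * x (some ⟨k, q⟩) = - Parm a x k 1 := by
    intro k
    have h2 : ∀ q : Fin (a k - 1),
        ((Cartan a none (some ⟨k, q⟩) : ℚ) : F) * x (some ⟨k, q⟩)
        = if q.val = 0 then -(x (some ⟨k, q⟩)) else 0 := by
      intro q; simp only [Cartan, Matrix.of_apply]; split_ifs <;> simp
    rw [Finset.sum_congr rfl fun q _ => h2 q, sum_ite_fin, parm_eq]
    split_ifs <;> simp
  rw [Finset.sum_congr rfl fun k _ => h1 k]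
  simp [Cartan]
  ring

lemma row_some (a : Fin 3 → ℕ) (x : JIdx a → F) (k : Fin 3) (p : Fin (a k - 1)) :
    ∑ j : JIdx a, (Cartan a (some ⟨k, p⟩) j : F) * x j
      = - Parm a x k p.val + 2 * Parm a x k (p.val + 1) - Parm a x k (p.val + 2) := by
  rw [Fintype.sum_option, ← Finset.univ_sigma_univ, Finset.sum_sigma]
  rw [Finset.sum_eq_single k]
  · have hsplit : ∀ q : Fin (a k - 1),
        ((Cartan a (some ⟨k, p⟩) (some ⟨k, q⟩) : ℚ) : F) * x (some ⟨k, q⟩)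
        = (if q.val = p.val then 2 * x (some ⟨k, q⟩) else 0)
          + (if q.val = p.val + 1 then -(x (some ⟨k, q⟩)) else 0)
          + (if q.val + 1 = p.val then -(x (some ⟨k, q⟩)) else 0) := by
      intro q
      simp only [Cartan, Matrix.of_apply, if_pos rfl]
      split_ifs <;> first | (exfalso; omega) | (push_cast; ring)
    rw [Finset.sum_congr rfl fun q _ => hsplit q, Finset.sum_add_distrib,
      Finset.sum_add_distrib]
    have e1 : (∑ q : Fin (a k - 1), if q.val = p.val then 2 * x (some ⟨k, q⟩) else 0)
        = 2 * Parm a x k (p.val + 1) := by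
      rw [sum_ite_fin, parm_eq, dif_pos p.2, dif_pos p.2]
    have e2 : (∑ q : Fin (a k - 1), if q.val = p.val + 1 then -(x (some ⟨k, q⟩)) else 0)
        = - Parm a x k (p.val + 2) := by
      rw [sum_ite_fin, show p.val + 2 = (p.val + 1) + 1 from rfl, parm_eq]
      split_ifs <;> simp
    have hnone : ((Cartan a (some ⟨k, p⟩) none : ℚ) : F) * x none
        = (if p.val = 0 then -(x none) else 0) := by
      simp only [Cartan, Matrix.of_apply]; split_ifs <;> simp
    have h3 : (∑ q : Fin (a k - 1), if q.val + 1 = p.val then -(x (some ⟨k, q⟩)) else 0)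
        + (if p.val = 0 then -(x none) else 0) = - Parm a x k p.val := by
      rcases hp : p.val with _ | s
      · rw [Finset.sum_eq_zero fun q _ => by rw [if_neg]; omega]
        simp [Parm]
      · have he : ∀ q : Fin (a k - 1), (if q.val + 1 = s + 1 then -(x (some ⟨k, q⟩)) else 0)
            = (if q.val = s then -(x (some ⟨k, q⟩)) else 0) := by
          intro q; split_ifs <;> first | rfl | omega
        rw [Finset.sum_congr rfl fun q _ => he q, sum_ite_fin, if_neg (Nat.succ_ne_zero s),
          parm_eq]
        split_ifs <;> simp
    rw [e1, e2, hnone]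
    linear_combination h3
  · intro k' _ hk'
    apply Finset.sum_eq_zero
    intro q _
    have h0 : ((Cartan a (some ⟨k, p⟩) (some ⟨k', q⟩) : ℚ) : F) = 0 := by
      simp only [Cartan, Matrix.of_apply, if_neg (Ne.symm hk')]; simp
    rw [h0, zero_mul]
  · simp

lemma pathSq (z : ℕ → ℝ) (m : ℕ) :
    ∑ i ∈ Finset.range m,
      ((i:ℝ)+1)*((i:ℝ)+2) * (z i/((i:ℝ)+1) - z (i+1)/((i:ℝ)+2))^2
    = 2*∑ i ∈ Finset.range m, (z i)^2 - 2*∑ i ∈ Finset.range m, z i * z (i+1)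
      + ((m:ℝ)/((m:ℝ)+1)) * (z m)^2 := by
  induction m with
  | zero => simp
  | succ n ih =>
    rw [Finset.sum_range_succ, Finset.sum_range_succ, Finset.sum_range_succ, ih]
    have h1 : ((n:ℝ)+1) ≠ 0 := by positivity
    have h2 : ((n:ℝ)+2) ≠ 0 := by positivity
    push_cast
    field_simp
    ring

/-- The square terms attached to arm `k`. -/
noncomputable def armSq (a : Fin 3 → ℕ) (x : JIdx a → ℝ) (k : Fin 3) : ℝ :=
  ∑ i ∈ Finset.range (a k - 1),
    ((i:ℝ)+1)*((i:ℝ)+2) * (Parm a x k (a k - 1 - i)/((i:ℝ)+1)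
      - Parm a x k (a k - 1 - (i+1))/((i:ℝ)+2))^2

lemma armSq_nonneg (a : Fin 3 → ℕ) (x : JIdx a → ℝ) (k : Fin 3) : 0 ≤ armSq a x k := by
  apply Finset.sum_nonneg
  intro i _
  positivity

lemma quad_id (a : Fin 3 → ℕ) (ha : ∀ k, 0 < a k) (x : JIdx a → ℝ) :
    ∑ i : JIdx a, ∑ j : JIdx a, (Cartan a i j : ℝ) * x i * x j
      = (chiQ a : ℝ) * (x none)^2 + ∑ k : Fin 3, armSq a x k := by
  have hrows : ∑ i : JIdx a, ∑ j : JIdx a, (Cartan a i j : ℝ) * x i * x j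
      = ∑ i : JIdx a, x i * ∑ j : JIdx a, (Cartan a i j : ℝ) * x j := by
    refine Finset.sum_congr rfl fun i _ => ?_
    rw [Finset.mul_sum]
    exact Finset.sum_congr rfl fun j _ => by ring
  have harm : ∀ k : Fin 3,
      (∑ p : Fin (a k - 1), x (some ⟨k, p⟩)
        * ∑ j : JIdx a, (Cartan a (some ⟨k, p⟩) j : ℝ) * x j)
      = ∑ t ∈ Finset.range (a k - 1), Parm a x k (t+1)
          * (- Parm a x k t + 2 * Parm a x k (t+1) - Parm a x k (t+2)) := by
    intro k
    rw [← Fin.sum_univ_eq_sum_range]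
    refine Finset.sum_congr rfl fun p _ => ?_
    rw [row_some, parm_val a x k p]
  have hshift : ∀ k : Fin 3,
      (∑ t ∈ Finset.range (a k - 1), Parm a x k (t+1) * Parm a x k (t+1+1))
      = (∑ t ∈ Finset.range (a k - 1), Parm a x k t * Parm a x k (t+1))
        - Parm a x k 0 * Parm a x k 1
        + Parm a x k (a k - 1) * Parm a x k (a k - 1 + 1) := by
    intro k
    have h1 := Finset.sum_range_succ' (fun t => Parm a x k t * Parm a x k (t+1)) (a k - 1)
    have h2 := Finset.sum_range_succ (fun t => Parm a x k t * Parm a x k (t+1)) (a k - 1)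
    linarith [h1, h2]
  have hsum : ∀ k : Fin 3,
      (∑ t ∈ Finset.range (a k - 1), Parm a x k (t+1)
          * (- Parm a x k t + 2 * Parm a x k (t+1) - Parm a x k (t+2)))
      = 2 * (∑ t ∈ Finset.range (a k - 1), (Parm a x k (t+1))^2)
        - 2 * (∑ t ∈ Finset.range (a k - 1), Parm a x k t * Parm a x k (t+1))
        + x none * Parm a x k 1 := by
    intro k
    have e : ∀ t ∈ Finset.range (a k - 1), Parm a x k (t+1)
          * (- Parm a x k t + 2 * Parm a x k (t+1) - Parm a x k (t+2))
        = 2*(Parm a x k (t+1))^2 - Parm a x k t * Parm a x k (t+1)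
          - Parm a x k (t+1) * Parm a x k (t+1+1) := by
      intro t _
      rw [show t+1+1 = t+2 from rfl]
      ring
    rw [Finset.sum_congr rfl e, Finset.sum_sub_distrib, Finset.sum_sub_distrib,
      ← Finset.mul_sum, hshift, parm_top, parm_zero]
    ring
  have hrefl1 : ∀ k : Fin 3,
      (∑ i ∈ Finset.range (a k - 1), (Parm a x k (a k - 1 - i))^2)
      = ∑ t ∈ Finset.range (a k - 1), (Parm a x k (t+1))^2 := by
    intro k
    rw [← Finset.sum_range_reflect (fun t => (Parm a x k (t+1))^2) (a k - 1)]
    refine Finset.sum_congr rfl fun i hi => ?_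
    have hi' : i < a k - 1 := Finset.mem_range.1 hi
    have : a k - 1 - 1 - i + 1 = a k - 1 - i := by omega
    rw [this]
  have hrefl2 : ∀ k : Fin 3,
      (∑ i ∈ Finset.range (a k - 1),
        Parm a x k (a k - 1 - i) * Parm a x k (a k - 1 - (i+1)))
      = ∑ t ∈ Finset.range (a k - 1), Parm a x k t * Parm a x k (t+1) := by
    intro k
    rw [← Finset.sum_range_reflect (fun t => Parm a x k t * Parm a x k (t+1)) (a k - 1)]
    refine Finset.sum_congr rfl fun i hi => ?_
    have hi' : i < a k - 1 := Finset.mem_range.1 hi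
    have e1 : a k - 1 - 1 - i = a k - 1 - (i+1) := by omega
    have e2 : a k - 1 - 1 - i + 1 = a k - 1 - i := by omega
    rw [e2, e1]
    ring
  have harmSq : ∀ k : Fin 3, armSq a x k
      = 2 * (∑ t ∈ Finset.range (a k - 1), (Parm a x k (t+1))^2)
        - 2 * (∑ t ∈ Finset.range (a k - 1), Parm a x k t * Parm a x k (t+1))
        + (((a k - 1 : ℕ):ℝ)/(((a k - 1 : ℕ):ℝ)+1)) * (x none)^2 := by
    intro k
    have h := pathSq (fun i => Parm a x k (a k - 1 - i)) (a k - 1)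
    unfold armSq
    rw [h, hrefl1 k, hrefl2 k, Nat.sub_self, parm_zero]
  have hcoef : (2:ℝ) = (chiQ a : ℝ)
      + ∑ k : Fin 3, (((a k - 1 : ℕ):ℝ)/(((a k - 1 : ℕ):ℝ)+1)) := by
    have hc : ∀ k : Fin 3, (((a k - 1 : ℕ):ℝ)/(((a k - 1 : ℕ):ℝ)+1))
        = 1 - 1/(a k : ℝ) := by
      intro k
      have h1 : ((a k - 1 : ℕ):ℝ) = (a k : ℝ) - 1 := by
        rw [Nat.cast_sub (ha k)]; simp
      have h2 : (a k : ℝ) ≠ 0 := by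
        exact_mod_cast (ha k).ne'
      rw [h1]
      field_simp
      rw [sub_add_cancel, mul_div_cancel_left₀ _ h2]
    rw [Finset.sum_congr rfl fun k _ => hc k, Fin.sum_univ_three]
    have h0 : (a 0 : ℝ) ≠ 0 := by exact_mod_cast (ha 0).ne'
    have h1 : (a 1 : ℝ) ≠ 0 := by exact_mod_cast (ha 1).ne'
    have h2 : (a 2 : ℝ) ≠ 0 := by exact_mod_cast (ha 2).ne'
    unfold chiQ
    push_cast
    field_simp
    ring
  rw [hrows, Fintype.sum_option, ← Finset.univ_sigma_univ, Finset.sum_sigma, row_none,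
    Finset.sum_congr rfl (fun k _ => harm k),
    Finset.sum_congr rfl (fun k _ => hsum k),
    Finset.sum_congr rfl (fun k _ => harmSq k)]
  rw [Finset.sum_add_distrib, Finset.sum_add_distrib, ← Finset.mul_sum, ← Finset.sum_mul]
  linear_combination (x none)^2 * hcoef

end Aux

/-- If `χ > 0` then the Cartan matrix `C` of `T(a₁,a₂,a₃)` is positive definite, hence
invertible, and the `b`-th column of `C⁻¹` is `v/χ`; in particular `(C⁻¹)_{b,b} = 1/χ`
and `(C⁻¹)_{b,(k,p)} = (1 - p/a_k)/χ`. -/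
theorem stmt19 (a : Fin 3 → ℕ) (ha : ∀ k, 0 < a k) (hchi : 0 < chiQ a) :
    (∀ x : JIdx a → ℝ, x ≠ 0 →
      0 < ∑ i : JIdx a, ∑ j : JIdx a, (Cartan a i j : ℝ) * x i * x j) ∧
    IsUnit (Cartan a) ∧
    (∀ i : JIdx a, (Cartan a)⁻¹ i none = vWeight a i / chiQ a) ∧
    (Cartan a)⁻¹ none none = 1 / chiQ a ∧
    (∀ (k : Fin 3) (p : Fin (a k - 1)),
      (Cartan a)⁻¹ none (some ⟨k, p⟩) = (1 - ((p.val : ℚ) + 1) / (a k : ℚ)) / chiQ a) := by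
  have hchiR : (0:ℝ) < (chiQ a : ℝ) := by exact_mod_cast hchi
  -- Positive definiteness
  have hpos : ∀ x : JIdx a → ℝ, x ≠ 0 →
      0 < ∑ i : JIdx a, ∑ j : JIdx a, (Cartan a i j : ℝ) * x i * x j := by
    intro x hx
    rw [quad_id a ha x]
    by_cases hb : x none = 0
    · have hex : ∃ k p, x (some ⟨k, p⟩) ≠ 0 := by
        by_contra hc
        push_neg at hc
        apply hx
        funext i
        rcases i with _ | ⟨k, p⟩
        · exact hb
        · exact hc k p
      obtain ⟨k, p, hp⟩ := hex
      have hTk : 0 < armSq a x k := by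
        rcases (armSq_nonneg a x k).lt_or_eq with h | h
        · exact h
        · exfalso
          have hterm : ∀ i ∈ Finset.range (a k - 1),
              ((i:ℝ)+1)*((i:ℝ)+2) * (Parm a x k (a k - 1 - i)/((i:ℝ)+1)
                - Parm a x k (a k - 1 - (i+1))/((i:ℝ)+2))^2 = 0 := by
            refine (Finset.sum_eq_zero_iff_of_nonneg fun i _ => by positivity).1 ?_
            exact h.symm
          have key : ∀ q, q ≤ a k - 1 → Parm a x k q = 0 := by
            intro q
            induction q with
            | zero => intro _; rw [parm_zero]; exact hb
            | succ t iht =>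
              intro hq
              have hi : a k - 1 - (t+1) < a k - 1 := by omega
              have h0 := hterm (a k - 1 - (t+1)) (Finset.mem_range.2 hi)
              set i := a k - 1 - (t+1) with hidef
              have e1 : a k - 1 - i = t + 1 := by omega
              have e2 : a k - 1 - (i+1) = t := by omega
              rw [e1, e2] at h0
              have hpos1 : (0:ℝ) < ((i:ℝ)+1)*((i:ℝ)+2) := by positivity
              have h4 : Parm a x k (t+1)/((i:ℝ)+1) - Parm a x k t/((i:ℝ)+2) = 0 := by
                rcases mul_eq_zero.1 h0 with h' | h'
                · exact absurd h' hpos1.ne'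
                · exact pow_eq_zero_iff two_ne_zero |>.1 h'
              rw [iht (by omega)] at h4
              have h5 : Parm a x k (t+1)/((i:ℝ)+1) = 0 := by
                simpa using h4
              have hne : ((i:ℝ)+1) ≠ 0 := by positivity
              rcases div_eq_zero_iff.1 h5 with h' | h'
              · exact h'
              · exact absurd h' hne
          exact hp (by rw [parm_val a x k p]; exact key _ (by omega))
      have hsum : 0 < ∑ k' : Fin 3, armSq a x k' :=
        Finset.sum_pos' (fun k' _ => armSq_nonneg a x k') ⟨k, Finset.mem_univ k, hTk⟩
      rw [hb]
      simpa using hsum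
    · have h1 : 0 < (chiQ a:ℝ) * (x none)^2 := by positivity
      have h2 : 0 ≤ ∑ k : Fin 3, armSq a x k :=
        Finset.sum_nonneg fun k _ => armSq_nonneg a x k
      linarith
  -- determinant nonzero
  have hdet : (Cartan a).det ≠ 0 := by
    intro h0
    have hdetR : ((Cartan a).map (Rat.cast : ℚ → ℝ)).det = 0 := by
      have := (Rat.castHom ℝ).map_det (Cartan a)
      rw [h0, map_zero] at this
      exact this.symm
    obtain ⟨v, hv, hmv⟩ := Matrix.exists_mulVec_eq_zero_iff.2 hdetR
    have hrow : ∀ i, (∑ j : JIdx a, (Cartan a i j : ℝ) * v j) = 0 := by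
      intro i
      have := congrFun hmv i
      simpa [Matrix.mulVec, dotProduct, Matrix.map_apply] using this
    have hQ0 : ∑ i : JIdx a, ∑ j : JIdx a, (Cartan a i j : ℝ) * v i * v j = 0 := by
      rw [Finset.sum_congr rfl fun i (_ : i ∈ Finset.univ) => show
          (∑ j : JIdx a, (Cartan a i j : ℝ) * v i * v j)
            = v i * ∑ j : JIdx a, (Cartan a i j : ℝ) * v j by
        rw [Finset.mul_sum]; exact Finset.sum_congr rfl fun j _ => by ring]
      rw [Finset.sum_congr rfl fun i (_ : i ∈ Finset.univ) => by rw [hrow i]]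
      simp
    exact absurd hQ0 (hpos v hv).ne'
  have hdetU : IsUnit (Cartan a).det := isUnit_iff_ne_zero.2 hdet
  have hunit : IsUnit (Cartan a) := (Matrix.isUnit_iff_isUnit_det _).2 hdetU
  -- the key vector computation
  have hParmv : ∀ (k : Fin 3) (q : ℕ), q ≤ a k →
      Parm a (vWeight a) k q = 1 - (q:ℚ)/(a k) := by
    intro k q hq
    have hak : (a k : ℚ) ≠ 0 := by exact_mod_cast (ha k).ne'
    rcases q with _ | t
    · rw [parm_zero]
      show (1:ℚ) = 1 - 0/(a k)
      simp
    · rw [parm_eq]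
      split_ifs with h
      · show 1 - ((t:ℚ) + 1) / (a k : ℚ) = 1 - (↑(t+1):ℚ)/(a k)
        push_cast
        ring
      · have he : t + 1 = a k := by omega
        rw [he]
        field_simp
        norm_num
  have hmulv : (Cartan a).mulVec (vWeight a) = Pi.single none (chiQ a) := by
    funext i
    have hmv : (Cartan a).mulVec (vWeight a) i
        = ∑ j : JIdx a, Cartan a i j * vWeight a j := by
      simp [Matrix.mulVec, dotProduct]
    rcases i with _ | ⟨k, p⟩
    · have hr := row_none a (vWeight a) (F := ℚ)
      simp only [Rat.cast_id] at hr
      rw [hmv, hr]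
      rw [Finset.sum_congr rfl fun k (_ : k ∈ Finset.univ) => hParmv k 1 (ha k)]
      rw [Fin.sum_univ_three, Pi.single_eq_same]
      show 2 * 1 - _ = _
      unfold chiQ
      push_cast
      ring
    · have hr := row_some a (vWeight a) k p (F := ℚ)
      simp only [Rat.cast_id] at hr
      rw [hmv, hr]
      have hp2 : p.val < a k - 1 := p.2
      rw [hParmv k p.val (by omega), hParmv k (p.val+1) (by omega),
        hParmv k (p.val+2) (by omega), Pi.single_eq_of_ne (by simp)]
      push_cast
      ring
  have hw : (Cartan a).mulVec (fun i => vWeight a i / chiQ a) = Pi.single none 1 := by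
    have hsmul : (fun i => vWeight a i / chiQ a) = (chiQ a)⁻¹ • (vWeight a) := by
      funext i
      simp [div_eq_mul_inv, mul_comm]
    rw [hsmul, Matrix.mulVec_smul, hmulv]
    funext i
    rcases eq_or_ne i none with h | h
    · subst h
      simp [Pi.single_eq_same, inv_mul_cancel₀ hchi.ne']
    · simp [Pi.single_eq_of_ne h]
  have hinvcol : ∀ i : JIdx a, (Cartan a)⁻¹ i none = vWeight a i / chiQ a := by
    have h1 : (Cartan a)⁻¹.mulVec ((Cartan a).mulVec (fun i => vWeight a i / chiQ a))
        = fun i => vWeight a i / chiQ a := by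
      rw [Matrix.mulVec_mulVec, Matrix.nonsing_inv_mul _ hdetU, Matrix.one_mulVec]
    rw [hw, Matrix.mulVec_single] at h1
    intro i
    have h2 := congrFun h1 i
    simpa using h2
  -- symmetry
  have hsym : (Cartan a).transpose = Cartan a := by
    ext i j
    rcases i with _ | ⟨k, p⟩ <;> rcases j with _ | ⟨k', q⟩ <;>
      simp only [Matrix.transpose_apply, Cartan, Matrix.of_apply]
    by_cases hk : k = k'
    · subst hk
      simp only [if_pos rfl]
      split_ifs <;> first | rfl | omega
    · rw [if_neg hk, if_neg (Ne.symm hk)]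
  have hsyminv : ∀ (k : Fin 3) (p : Fin (a k - 1)),
      (Cartan a)⁻¹ none (some ⟨k, p⟩) = (Cartan a)⁻¹ (some ⟨k, p⟩) none := by
    intro k p
    have h1 : ((Cartan a)⁻¹).transpose = (Cartan a)⁻¹ := by
      rw [Matrix.transpose_nonsing_inv, hsym]
    conv_lhs => rw [← h1]
    rfl
  refine ⟨hpos, hunit, hinvcol, ?_, ?_⟩
  · rw [hinvcol none]
    rfl
  · intro k p
    rw [hsyminv k p, hinvcol (some ⟨k, p⟩)]
    rfl
end
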